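/- arXiv:0909.1467 — 7 statements merged into one kernel-verified Lean document; each statement's English description precedes it below -/
import Mathlib

section
/- The Hamiltonian H(p) = Tr(A p⊗p) + B·p + ∫ (e^{p·y} − 1 − (p·y)1_{|y|<1}) J(y) dy is superlinear: H(p)/|p| → ∞ as |p| → ∞. In fact there exists c(J) > 0 such that H(p) ≥ c(J) e^{ρ₀|p|/2} + O(|p|³). -/
open MeasureTheory Real Set Filter
open scoped RealInnerProductSpace

/-!
The integrand `e^{p·y} - 1 - (p·y) 1_{|y|<1}` is everywhere at least `-min(1, |y|²)`, so away
from a small ball its contribution is bounded below by the constant `-∫ min(1, |y|²) J`.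
On the ball of radius `ρ₀/8` around `(3ρ₀/4) p/|p|` we have `p·y ≥ ρ₀|p|/2` and `|y| < ρ₀`, and
`J` is bounded below there by its positive minimum over the annulus `5ρ₀/8 ≤ |y| ≤ 7ρ₀/8`, so
this ball contributes at least a fixed multiple of `e^{ρ₀|p|/2} - 1 - ρ₀|p|`. Together with
`Tr(A p⊗p) ≥ 0` and `B·p ≥ -|B||p|` this gives the exponential lower bound, and superlinearity
follows from it.
-/

namespace Real

lemma abs_exp_sub_one_sub_le_two_mul_exp_abs {x i : ℝ} (hi : |i| ≤ |x|) :
    |exp x - 1 - i| ≤ 2 * exp |x| := by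
  have h1 : exp x ≤ exp |x| := exp_le_exp.2 (le_abs_self x)
  have h2 : |x| + 1 ≤ exp |x| := add_one_le_exp |x|
  refine abs_le.2 ⟨?_, ?_⟩ <;>
    linarith [le_abs_self i, neg_abs_le i, exp_pos x, abs_nonneg x]

lemma abs_exp_sub_one_sub_id_le_two_mul_sq_mul_exp_abs (x : ℝ) :
    |exp x - 1 - x| ≤ 2 * x ^ 2 * exp |x| := by
  rcases le_or_gt |x| 1 with h | h
  · calc |exp x - 1 - x| ≤ x ^ 2 := abs_exp_sub_one_sub_id_le h
      _ ≤ 2 * x ^ 2 * exp |x| := by nlinarith [one_le_exp (abs_nonneg x), sq_nonneg x]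
  · have hx : 1 ≤ x ^ 2 := (one_lt_sq_iff_one_lt_abs x).2 h |>.le
    calc |exp x - 1 - x| ≤ 2 * exp |x| := abs_exp_sub_one_sub_le_two_mul_exp_abs le_rfl
      _ ≤ 2 * x ^ 2 * exp |x| := by nlinarith [exp_pos |x|]

lemma tendsto_exp_sub_cubic_div_atTop {a c : ℝ} (C : ℝ) (ha : 0 < a) (hc : 0 < c) :
    Tendsto (fun t => (c * exp (a * t) - C * (1 + t ^ 3)) / t) atTop atTop := by
  have hexp : Tendsto (fun t => exp (a * t) / t ^ 3) atTop atTop := by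
    simpa using tendsto_exp_mul_div_rpow_atTop 3 a ha
  have hinv : Tendsto (fun t : ℝ => C * (t ^ 3)⁻¹ + C) atTop (nhds C) := by
    simpa using ((tendsto_pow_atTop three_ne_zero).inv_tendsto_atTop.const_mul C).add_const C
  have hbracket := (hexp.const_mul_atTop hc).atTop_add hinv.neg
  refine ((tendsto_pow_atTop two_ne_zero).atTop_mul_atTop₀ hbracket).congr' ?_
  filter_upwards [eventually_gt_atTop 0] with t ht
  field_simp
  ring

end Real

lemma tendsto_div_norm_cobounded_of_exp_le {F : Type*} [NormedAddCommGroup F] {f : F → ℝ}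
    {a c C : ℝ} (ha : 0 < a) (hc : 0 < c)
    (hf : ∀ p, c * exp (a * ‖p‖) - C * (1 + ‖p‖ ^ 3) ≤ f p) :
    Tendsto (fun p => f p / ‖p‖) (Bornology.cobounded F) atTop := by
  refine tendsto_atTop_mono' _ ?_
    ((tendsto_exp_sub_cubic_div_atTop C ha hc).comp tendsto_norm_cobounded_atTop)
  filter_upwards [tendsto_norm_cobounded_atTop.eventually (eventually_gt_atTop 0)] with p hp
  exact div_le_div_of_nonneg_right (hf p) hp.le

lemma exists_pos_le_of_norm_mem_Icc {F : Type*} [NormedAddCommGroup F] [ProperSpace F]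
    {J : F → ℝ} {ρ r R : ℝ} (hJcont : ContinuousOn J {0}ᶜ)
    (hJpos : ∀ y ∈ Metric.ball (0 : F) ρ \ {0}, 0 < J y) (hr : 0 < r) (hR : R < ρ) :
    ∃ m > 0, ∀ y, r ≤ ‖y‖ → ‖y‖ ≤ R → m ≤ J y := by
  set K := Metric.closedBall (0 : F) R \ Metric.ball 0 r
  have hmemK : ∀ y, y ∈ K ↔ r ≤ ‖y‖ ∧ ‖y‖ ≤ R := fun y => by
    simp [K, and_comm]
  have hK : IsCompact K := (isCompact_closedBall 0 R).diff Metric.isOpen_ball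
  have hK0 : K ⊆ Metric.ball 0 ρ \ {0} := fun y hy => by
    rw [hmemK] at hy
    refine ⟨mem_ball_zero_iff.2 (by linarith), fun h => ?_⟩
    rw [mem_singleton_iff.1 h, norm_zero] at hy
    linarith
  obtain ⟨m, hm, hmK⟩ := hK.exists_forall_le' (hJcont.mono fun y hy => (hK0 hy).2)
    fun y hy => hJpos y (hK0 hy)
  exact ⟨m, hm, fun y h1 h2 => hmK y ((hmemK y).2 ⟨h1, h2⟩)⟩

section compensatedExp

variable {E : Type*} [NormedAddCommGroup E] [InnerProductSpace ℝ E]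

noncomputable def compensatedExp (p y : E) : ℝ :=
  exp ⟪p, y⟫ - 1 - {y : E | ‖y‖ < 1}.indicator (fun y => ⟪p, y⟫) y

lemma compensatedExp_zero_left (y : E) : compensatedExp 0 y = 0 := by
  simp [compensatedExp]

lemma neg_min_one_sq_le_compensatedExp (p y : E) :
    -min 1 (‖y‖ ^ 2) ≤ compensatedExp p y := by
  have hexp := add_one_le_exp ⟪p, y⟫
  by_cases h : ‖y‖ < 1
  · rw [compensatedExp, indicator_of_mem (s := {y : E | ‖y‖ < 1}) h]
    linarith [le_min zero_le_one (sq_nonneg ‖y‖)]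
  · rw [compensatedExp, indicator_of_notMem (s := {y : E | ‖y‖ < 1}) h,
      min_eq_left (one_le_pow₀ (not_lt.1 h))]
    linarith [exp_pos ⟪p, y⟫]

lemma abs_compensatedExp_le (p y : E) : |compensatedExp p y| ≤ 2 * exp (‖p‖ * ‖y‖) := by
  refine (abs_exp_sub_one_sub_le_two_mul_exp_abs
    (norm_indicator_le_norm_self (fun y => ⟪p, y⟫) y)).trans ?_
  gcongr
  exact abs_real_inner_le_norm p y

lemma abs_compensatedExp_le_of_norm_le {p y : E} {R : ℝ} (hy : ‖y‖ ≤ R) :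
    |compensatedExp p y| ≤ 2 * (‖p‖ ^ 2 + 1) * exp (‖p‖ * R) * min 1 (‖y‖ ^ 2) := by
  by_cases h : ‖y‖ < 1
  · have hx : ⟪p, y⟫ ^ 2 ≤ (‖p‖ * ‖y‖) ^ 2 :=
      sq_le_sq' (abs_le.1 (abs_real_inner_le_norm p y)).1 (abs_le.1 (abs_real_inner_le_norm p y)).2
    rw [min_eq_right (pow_le_one₀ (norm_nonneg y) h.le), compensatedExp,
      indicator_of_mem (s := {y : E | ‖y‖ < 1}) h]
    calc |exp ⟪p, y⟫ - 1 - ⟪p, y⟫| ≤ 2 * ⟪p, y⟫ ^ 2 * exp |⟪p, y⟫| :=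
          abs_exp_sub_one_sub_id_le_two_mul_sq_mul_exp_abs _
      _ ≤ 2 * (‖p‖ * ‖y‖) ^ 2 * exp (‖p‖ * R) := by
          gcongr
          exact (abs_real_inner_le_norm p y).trans (by gcongr)
      _ ≤ 2 * (‖p‖ ^ 2 + 1) * exp (‖p‖ * R) * ‖y‖ ^ 2 := by
          nlinarith [exp_pos (‖p‖ * R), sq_nonneg ‖y‖]
  · rw [min_eq_left (one_le_pow₀ (not_lt.1 h)), mul_one]
    have hR : exp (‖p‖ * ‖y‖) ≤ exp (‖p‖ * R) := by gcongr
    refine (abs_compensatedExp_le p y).trans ?_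
    nlinarith [exp_pos (‖p‖ * R), sq_nonneg ‖p‖]

lemma le_inner_of_dist_le {ρ : ℝ} {p y : E} (hρ : 0 ≤ ρ)
    (hy : dist y ((3 * ρ / 4) • ‖p‖⁻¹ • p) ≤ ρ / 8) :
    ρ * ‖p‖ / 2 ≤ ⟪p, y⟫ := by
  set z := (3 * ρ / 4) • ‖p‖⁻¹ • p
  have hz : ⟪p, z⟫ = 3 * ρ / 4 * ‖p‖ := by
    rw [real_inner_smul_right, real_inner_smul_right, real_inner_self_eq_norm_sq]
    rcases eq_or_ne ‖p‖ 0 with h | h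
    · simp [h]
    · field_simp
  have hyz : ‖p‖ * ‖y - z‖ ≤ ‖p‖ * (ρ / 8) := by
    gcongr
    rwa [← dist_eq_norm]
  have h := (abs_le.1 (abs_real_inner_le_norm p (y - z))).1
  rw [inner_sub_right, hz] at h
  nlinarith [norm_nonneg p]

lemma norm_bounds_of_dist_le {ρ : ℝ} {p y : E} (hρ : 0 ≤ ρ) (hp : p ≠ 0)
    (hy : dist y ((3 * ρ / 4) • ‖p‖⁻¹ • p) ≤ ρ / 8) :
    5 * ρ / 8 ≤ ‖y‖ ∧ ‖y‖ ≤ 7 * ρ / 8 := by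
  have hz : ‖(3 * ρ / 4) • ‖p‖⁻¹ • p‖ = 3 * ρ / 4 := by
    rw [norm_smul, norm_smul, norm_inv, norm_norm, inv_mul_cancel₀ (norm_ne_zero_iff.2 hp),
      Real.norm_of_nonneg (by positivity), mul_one]
  have h := abs_le.1 (abs_norm_sub_norm_le y ((3 * ρ / 4) • ‖p‖⁻¹ • p))
  rw [hz, ← dist_eq_norm] at h
  constructor <;> linarith [h.1, h.2]

lemma compensatedExp_ge_of_dist_le {ρ : ℝ} {p y : E} (hρ : 0 ≤ ρ) (hp : p ≠ 0)
    (hy : dist y ((3 * ρ / 4) • ‖p‖⁻¹ • p) ≤ ρ / 8) :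
    exp (ρ * ‖p‖ / 2) - 1 - ρ * ‖p‖ ≤ compensatedExp p y := by
  have hexp : exp (ρ * ‖p‖ / 2) ≤ exp ⟪p, y⟫ := exp_le_exp.2 (le_inner_of_dist_le hρ hy)
  have hind : {y : E | ‖y‖ < 1}.indicator (fun y => ⟪p, y⟫) y ≤ ρ * ‖p‖ := by
    refine (le_abs_self _).trans ((norm_indicator_le_norm_self (fun y => ⟪p, y⟫) y).trans
      ((abs_real_inner_le_norm p y).trans ?_))
    nlinarith [(norm_bounds_of_dist_le hρ hp hy).2, norm_nonneg p]
  rw [compensatedExp]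
  linarith

end compensatedExp

section Integral

variable {E : Type*} [NormedAddCommGroup E] [InnerProductSpace ℝ E] [MeasurableSpace E]
  [BorelSpace E] {μ : Measure E} {J : E → ℝ}

lemma measurable_compensatedExp (p : E) : Measurable (compensatedExp p) := by
  have hinner : Continuous fun y : E => ⟪p, y⟫ := continuous_const.inner continuous_id
  exact (hinner.rexp.measurable.sub_const 1).sub
    (hinner.measurable.indicator (isOpen_lt continuous_norm continuous_const).measurableSet)

lemma integrable_compensatedExp_mul {ρ β : ℝ} {p : E}
    (hJmeas : AEStronglyMeasurable J μ) (hJnn : ∀ y, 0 ≤ J y)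
    (hint : Integrable (fun y => min 1 (‖y‖ ^ 2) * J y) μ) (hβ : ‖p‖ ≤ β)
    (hexp : IntegrableOn (fun y => exp (β * ‖y‖) * J y) {y | ρ < ‖y‖} μ) :
    Integrable (fun y => compensatedExp p y * J y) μ := by
  have hm : AEStronglyMeasurable (fun y => compensatedExp p y * J y) μ :=
    (measurable_compensatedExp p).aestronglyMeasurable.mul hJmeas
  have hnorm : ∀ y, ‖compensatedExp p y * J y‖ = |compensatedExp p y| * J y := fun y => by
    rw [norm_mul, Real.norm_eq_abs, Real.norm_eq_abs, abs_of_nonneg (hJnn y)]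
  have hcover : {y : E | ‖y‖ ≤ ρ} ∪ {y | ρ < ‖y‖} = univ := by
    ext y; simp [le_or_gt]
  rw [← integrableOn_univ, ← hcover]
  refine IntegrableOn.union ?_ ?_
  · refine (hint.const_mul (2 * (‖p‖ ^ 2 + 1) * exp (‖p‖ * ρ))).integrableOn.mono' hm.restrict
      (ae_restrict_of_forall_mem (measurableSet_le continuous_norm.measurable measurable_const)
        fun y hy => ?_)
    rw [hnorm, ← mul_assoc]
    exact mul_le_mul_of_nonneg_right (abs_compensatedExp_le_of_norm_le hy) (hJnn y)
  · refine (hexp.const_mul 2).mono' hm.restrict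
      (ae_restrict_of_forall_mem (measurableSet_lt measurable_const continuous_norm.measurable)
        fun y _ => ?_)
    rw [hnorm, ← mul_assoc]
    refine mul_le_mul_of_nonneg_right ((abs_compensatedExp_le p y).trans ?_) (hJnn y)
    gcongr

lemma integral_compensatedExp_mul_ge [ProperSpace E] [μ.IsAddHaarMeasure] {ρ m : ℝ} {p : E}
    (hρ : 0 ≤ ρ) (hm : 0 ≤ m) (hJnn : ∀ y, 0 ≤ J y)
    (hJlow : ∀ y, 5 * ρ / 8 ≤ ‖y‖ → ‖y‖ ≤ 7 * ρ / 8 → m ≤ J y)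
    (hint : Integrable (fun y => min 1 (‖y‖ ^ 2) * J y) μ)
    (hf : Integrable (fun y => compensatedExp p y * J y) μ) :
    m * μ.real (Metric.closedBall 0 (ρ / 8)) * (exp (ρ * ‖p‖ / 2) - 1 - ρ * ‖p‖)
      - ∫ y, min 1 (‖y‖ ^ 2) * J y ∂μ ≤ ∫ y, compensatedExp p y * J y ∂μ := by
  have hI : 0 ≤ ∫ y, min 1 (‖y‖ ^ 2) * J y ∂μ :=
    integral_nonneg fun y => mul_nonneg (le_min zero_le_one (sq_nonneg _)) (hJnn y)
  rcases eq_or_ne p 0 with rfl | hp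
  · simpa [compensatedExp_zero_left] using hI
  set S := Metric.closedBall ((3 * ρ / 4) • ‖p‖⁻¹ • p) (ρ / 8)
  set M := exp (ρ * ‖p‖ / 2) - 1 - ρ * ‖p‖
  have hS : MeasurableSet S := Metric.isClosed_closedBall.measurableSet
  have hpt : ∀ y, S.indicator (fun _ => m * M) y - min 1 (‖y‖ ^ 2) * J y ≤
      compensatedExp p y * J y := by
    intro y
    have hbelow := mul_le_mul_of_nonneg_right (neg_min_one_sq_le_compensatedExp p y) (hJnn y)
    by_cases hy : y ∈ S
    · have hyd : dist y _ ≤ ρ / 8 := hy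
      have hM := compensatedExp_ge_of_dist_le hρ hp hyd
      have hJ := hJlow y (norm_bounds_of_dist_le hρ hp hyd).1 (norm_bounds_of_dist_le hρ hp hyd).2
      have hmin : 0 ≤ min 1 (‖y‖ ^ 2) * J y :=
        mul_nonneg (le_min zero_le_one (sq_nonneg _)) (hJnn y)
      rw [indicator_of_mem hy]
      rcases le_or_gt M 0 with hM0 | hM0
      · nlinarith
      · nlinarith [mul_le_mul_of_nonneg_right hM (hJnn y)]
    · rw [indicator_of_notMem hy]
      linarith
  have hind : Integrable (S.indicator fun _ => m * M) μ :=
    (integrable_indicator_iff hS).2 (integrableOn_const measure_closedBall_lt_top.ne)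
  calc _ = ∫ y, (S.indicator (fun _ => m * M) y - min 1 (‖y‖ ^ 2) * J y) ∂μ := by
        rw [integral_sub hind hint, integral_indicator_const _ hS,
          Measure.addHaar_real_closedBall_center μ ((3 * ρ / 4) • ‖p‖⁻¹ • p), smul_eq_mul]
        ring
    _ ≤ _ := integral_mono (hind.sub hint) hf hpt

end Integral

theorem stmt_1_general {N : ℕ}
    (J : EuclideanSpace ℝ (Fin N) → ℝ) (ρ₀ : ℝ) (hρ₀ : 0 < ρ₀)
    (hJnn : ∀ y, 0 ≤ J y)
    (hJcont : ContinuousOn J {(0 : EuclideanSpace ℝ (Fin N))}ᶜ)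
    (hJpos : ∀ y ∈ Metric.ball (0 : EuclideanSpace ℝ (Fin N)) ρ₀ \ {0}, 0 < J y)
    (hint : Integrable (fun y => min 1 (‖y‖ ^ 2) * J y))
    (hexp : ∀ β > (0:ℝ), IntegrableOn (fun y => Real.exp (β * ‖y‖) * J y)
      {y : EuclideanSpace ℝ (Fin N) | ρ₀ / 2 < ‖y‖})
    (A : EuclideanSpace ℝ (Fin N) →L[ℝ] EuclideanSpace ℝ (Fin N))
    (hAnn : ∀ x, 0 ≤ ⟪x, A x⟫)
    (B : EuclideanSpace ℝ (Fin N))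
    (H : EuclideanSpace ℝ (Fin N) → ℝ)
    (hH : ∀ p, H p = ⟪p, A p⟫ + ⟪B, p⟫ +
      ∫ y, (Real.exp ⟪p, y⟫ - 1 -
        Set.indicator {y : EuclideanSpace ℝ (Fin N) | ‖y‖ < 1} (fun y => ⟪p, y⟫) y) * J y) :
    Filter.Tendsto (fun p => H p / ‖p‖)
      (Bornology.cobounded (EuclideanSpace ℝ (Fin N))) Filter.atTop ∧
    ∃ c > (0:ℝ), ∃ C : ℝ, 0 ≤ C ∧
      ∀ p, c * Real.exp (ρ₀ * ‖p‖ / 2) - C * (1 + ‖p‖ ^ 3) ≤ H p := by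
  have hH' : ∀ p, H p = ⟪p, A p⟫ + ⟪B, p⟫ + ∫ y, compensatedExp p y * J y := hH
  obtain ⟨m, hm, hJlow⟩ := exists_pos_le_of_norm_mem_Icc (r := 5 * ρ₀ / 8) (R := 7 * ρ₀ / 8)
    hJcont hJpos (by positivity) (by linarith)
  set c := m * volume.real (Metric.closedBall (0 : EuclideanSpace ℝ (Fin N)) (ρ₀ / 8))
  have hc : 0 < c := mul_pos hm <| ENNReal.toReal_pos
    (Metric.measure_closedBall_pos volume 0 (by positivity)).ne' measure_closedBall_lt_top.ne
  set I₀ := ∫ y, min 1 (‖y‖ ^ 2) * J y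
  have hI₀ : 0 ≤ I₀ :=
    integral_nonneg fun y => mul_nonneg (le_min zero_le_one (sq_nonneg _)) (hJnn y)
  have hlow : ∀ p, c * (exp (ρ₀ * ‖p‖ / 2) - 1 - ρ₀ * ‖p‖) - I₀ ≤
      ∫ y, compensatedExp p y * J y := fun p =>
    integral_compensatedExp_mul_ge hρ₀.le hm.le hJnn hJlow hint
      (integrable_compensatedExp_mul
        (measurable_of_continuousOn_compl_singleton 0 hJcont).aestronglyMeasurable hJnn hint
        (le_add_of_nonneg_right zero_le_one) (hexp _ (by positivity)))
  set C := ‖B‖ + c * ρ₀ + c + I₀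
  have hbound : ∀ p, c * exp (ρ₀ * ‖p‖ / 2) - C * (1 + ‖p‖ ^ 3) ≤ H p := by
    intro p
    have hB : -(‖B‖ * ‖p‖) ≤ ⟪B, p⟫ := (abs_le.1 (abs_real_inner_le_norm B p)).1
    have hcube : ‖p‖ ≤ 1 + ‖p‖ ^ 3 := by nlinarith [norm_nonneg p, sq_nonneg (‖p‖ - 1)]
    rw [hH' p]
    linarith [hlow p, hAnn p, mul_le_mul_of_nonneg_left hcube (norm_nonneg B),
      mul_le_mul_of_nonneg_left hcube (mul_pos hc hρ₀).le,
      mul_nonneg hc.le (pow_nonneg (norm_nonneg p) 3),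
      mul_nonneg hI₀ (pow_nonneg (norm_nonneg p) 3)]
  refine ⟨tendsto_div_norm_cobounded_of_exp_le (C := C) (half_pos hρ₀) hc fun p => ?_,
    c, hc, C, by positivity, hbound⟩
  rw [← mul_div_right_comm]
  exact hbound p

/-- The Hamiltonian is superlinear: `H(p)/‖p‖ → ∞` as `‖p‖ → ∞`; in fact
there are `c(J) > 0` and `C ≥ 0` with `H(p) ≥ c(J) e^{ρ₀‖p‖/2} - C(1 + ‖p‖³)`. -/
theorem stmt_1 {N : ℕ}
    (J : EuclideanSpace ℝ (Fin N) → ℝ) (ρ₀ : ℝ) (hρ₀ : 0 < ρ₀)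
    (hJnn : ∀ y, 0 ≤ J y)
    (hJC1 : ContDiffOn ℝ 1 J {(0 : EuclideanSpace ℝ (Fin N))}ᶜ)
    (hJcont : ContinuousOn J {(0 : EuclideanSpace ℝ (Fin N))}ᶜ)
    (hJpos : ∀ y ∈ Metric.ball (0 : EuclideanSpace ℝ (Fin N)) ρ₀ \ {0}, 0 < J y)
    (hsupp : Metric.ball (0 : EuclideanSpace ℝ (Fin N)) ρ₀ ⊆ Function.support J)
    (hint : Integrable (fun y => min 1 (‖y‖ ^ 2) * J y))
    (hexp : ∀ β > (0:ℝ), IntegrableOn (fun y => Real.exp (β * ‖y‖) * J y)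
      {y : EuclideanSpace ℝ (Fin N) | ρ₀ / 2 < ‖y‖})
    (A : EuclideanSpace ℝ (Fin N) →L[ℝ] EuclideanSpace ℝ (Fin N))
    (hAsym : ∀ x y, ⟪A x, y⟫ = ⟪x, A y⟫)
    (hAnn : ∀ x, 0 ≤ ⟪x, A x⟫)
    (B : EuclideanSpace ℝ (Fin N))
    (H : EuclideanSpace ℝ (Fin N) → ℝ)
    (hH : ∀ p, H p = ⟪p, A p⟫ + ⟪B, p⟫ +
      ∫ y, (Real.exp ⟪p, y⟫ - 1 -
        Set.indicator {y : EuclideanSpace ℝ (Fin N) | ‖y‖ < 1} (fun y => ⟪p, y⟫) y) * J y) :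
    Filter.Tendsto (fun p => H p / ‖p‖)
      (Bornology.cobounded (EuclideanSpace ℝ (Fin N))) Filter.atTop ∧
    ∃ c > (0:ℝ), ∃ C : ℝ, 0 ≤ C ∧
      ∀ p, c * Real.exp (ρ₀ * ‖p‖ / 2) - C * (1 + ‖p‖ ^ 3) ≤ H p :=
  stmt_1_general J ρ₀ hρ₀ hJnn hJcont hJpos hint hexp A hAnn B H hH
end

section
/- With H^ess(p) = ∫_{|y|>ρ₀/2} e^{p·y} J(y) dy, there exist constants c₁(J) > 0 and c₂(J) ≥ 0 such that p · DH^ess(p) ≥ c₁(J) (ρ₀|p|/2) e^{ρ₀|p|/2} − c₂(J)|p| for all p ∈ ℝ^N. -/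
/-!
Put `v = p / ‖p‖` and let `T` be the ball of radius `ρ₀/8` centred at `(5ρ₀/8) v`. On `T` one has
`p·y ≥ ρ₀‖p‖/2`, so the integrand is at least `(ρ₀‖p‖/2) e^{ρ₀‖p‖/2} J(y)`; everywhere else
`t e^t ≥ -|t| ≥ -‖p‖‖y‖` gives the integrand the lower bound `-‖p‖‖y‖J(y)`. Every such `T` lies in
the compact annulus `ρ₀/2 ≤ ‖y‖ ≤ 3ρ₀/4` inside `B_{ρ₀} \ {0}`, where the continuous positive `J`
is at least some `m > 0`, and all the `T` have the same Haar measure. Hence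
`c₁ = m |B_{ρ₀/8}|` and `c₂ = ∫_{‖y‖>ρ₀/2} ‖y‖ J(y) dy` work.
-/

open MeasureTheory Real Set Metric
open scoped RealInnerProductSpace

lemma mul_exp_le_mul_exp {s t : ℝ} (hs : 0 ≤ s) (hst : s ≤ t) : s * exp s ≤ t * exp t :=
  mul_le_mul hst (exp_le_exp.2 hst) (exp_pos s).le (hs.trans hst)

lemma neg_abs_le_mul_exp (t : ℝ) : -|t| ≤ t * exp t := by
  rcases le_or_gt 0 t with ht | ht
  · linarith [abs_nonneg t, mul_nonneg ht (exp_pos t).le]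
  · rw [abs_of_neg ht]
    nlinarith [exp_pos t, exp_le_one_iff.2 ht.le]

lemma abs_mul_exp_le_exp_two_mul_abs (t : ℝ) : |t * exp t| ≤ exp (2 * |t|) := by
  rw [abs_mul, abs_of_pos (exp_pos t), two_mul, exp_add]
  exact mul_le_mul (by linarith [add_one_le_exp |t|]) (exp_le_exp.2 (le_abs_self t))
    (exp_pos t).le (exp_pos _).le

section Cap

variable {E : Type*} [NormedAddCommGroup E] [InnerProductSpace ℝ E] {ρ : ℝ} {v y : E}

lemma lt_inner_of_mem_ball_smul (hv : ‖v‖ = 1) (hy : y ∈ ball ((5 * ρ / 8) • v) (ρ / 8)) :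
    ρ / 2 < ⟪v, y⟫ := by
  have h : |⟪v, y - (5 * ρ / 8) • v⟫| < ρ / 8 :=
    (abs_real_inner_le_norm _ _).trans_lt (by rw [hv, one_mul]; exact mem_ball_iff_norm.1 hy)
  rw [inner_sub_right, real_inner_smul_right, real_inner_self_eq_norm_sq, hv] at h
  linarith [(abs_lt.1 h).1]

lemma lt_norm_of_mem_ball_smul (hv : ‖v‖ = 1) (hy : y ∈ ball ((5 * ρ / 8) • v) (ρ / 8)) :
    ρ / 2 < ‖y‖ :=
  (lt_inner_of_mem_ball_smul hv hy).trans_le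
    ((real_inner_le_norm v y).trans_eq (by rw [hv, one_mul]))

lemma norm_lt_of_mem_ball_smul (hv : ‖v‖ = 1) (hy : y ∈ ball ((5 * ρ / 8) • v) (ρ / 8)) :
    ‖y‖ < 3 * ρ / 4 := by
  have hρ : 0 < ρ := by linarith [dist_nonneg.trans_lt (mem_ball.1 hy)]
  calc ‖y‖ ≤ ‖y - (5 * ρ / 8) • v‖ + ‖(5 * ρ / 8) • v‖ := norm_le_norm_sub_add _ _
    _ < ρ / 8 + 5 * ρ / 8 := by
        rw [norm_smul, hv, mul_one, norm_of_nonneg (by positivity)]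
        gcongr
        exact mem_ball_iff_norm.1 hy
    _ = 3 * ρ / 4 := by ring

lemma mul_norm_le_inner_of_mem_ball_smul {p : E} (hp : p ≠ 0)
    (hy : y ∈ ball ((5 * ρ / 8) • (‖p‖⁻¹ • p)) (ρ / 8)) : ρ * ‖p‖ / 2 ≤ ⟪p, y⟫ := by
  have hpv : ⟪p, y⟫ = ‖p‖ * ⟪‖p‖⁻¹ • p, y⟫ := by
    rw [real_inner_smul_left, mul_inv_cancel_left₀ (norm_ne_zero_iff.2 hp)]
  rw [hpv, mul_comm ρ, mul_div_assoc]
  exact mul_le_mul_of_nonneg_left (lt_inner_of_mem_ball_smul (norm_smul_inv_norm hp) hy).le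
    (norm_nonneg p)

end Cap

lemma exists_pos_le_of_mem_annulus {E : Type*} [NormedAddCommGroup E] [ProperSpace E]
    {J : E → ℝ} {ρ s r : ℝ} (hs : 0 < s) (hr : r < ρ) (hJcont : ContinuousOn J {0}ᶜ)
    (hJpos : ∀ y ∈ ball (0 : E) ρ \ {0}, 0 < J y) :
    ∃ m > 0, ∀ y : E, s ≤ ‖y‖ → ‖y‖ ≤ r → m ≤ J y := by
  have hK : closedBall (0 : E) r \ ball 0 s ⊆ ball 0 ρ \ {0} := by
    rintro y ⟨hyr, hys⟩
    simp only [mem_closedBall, mem_ball, dist_zero_right, not_lt] at hyr hys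
    refine ⟨mem_ball_zero_iff.2 (by linarith), fun h0 => ?_⟩
    rw [mem_singleton_iff.1 h0, norm_zero] at hys
    linarith
  obtain ⟨m, hm, hmJ⟩ := ((isCompact_closedBall 0 r).diff isOpen_ball).exists_forall_le'
    (hJcont.mono fun y hy => (hK hy).2) fun y hy => hJpos y (hK hy)
  exact ⟨m, hm, fun y hys hyr => hmJ y ⟨mem_closedBall_zero_iff.2 hyr,
    by simpa only [mem_ball_zero_iff, not_lt] using hys⟩⟩

section Integral

variable {E : Type*} [NormedAddCommGroup E] [InnerProductSpace ℝ E] {Ω T : Set E} {J : E → ℝ}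
  {p y : E} {a : ℝ}

lemma indicator_sub_le_inner_mul_exp (ha : 0 ≤ a) (haT : ∀ y ∈ T, a ≤ ⟪p, y⟫) (hJ : 0 ≤ J y) :
    a * exp a * T.indicator J y - ‖p‖ * (‖y‖ * J y) ≤ ⟪p, y⟫ * exp ⟪p, y⟫ * J y := by
  by_cases hyT : y ∈ T
  · rw [indicator_of_mem hyT]
    have := mul_le_mul_of_nonneg_right (mul_exp_le_mul_exp ha (haT y hyT)) hJ
    nlinarith [mul_nonneg (norm_nonneg p) (mul_nonneg (norm_nonneg y) hJ)]
  · rw [indicator_of_notMem hyT, mul_zero, zero_sub, ← mul_assoc, ← neg_mul]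
    refine mul_le_mul_of_nonneg_right ?_ hJ
    exact (neg_le_neg (abs_real_inner_le_norm p y)).trans (neg_abs_le_mul_exp _)

variable [MeasurableSpace E] {μ : Measure E}

lemma mul_exp_mul_setIntegral_sub_le_setIntegral_inner_mul_exp (ha : 0 ≤ a)
    (hT : MeasurableSet T) (hΩ : MeasurableSet Ω) (hTΩ : T ⊆ Ω) (haT : ∀ y ∈ T, a ≤ ⟪p, y⟫)
    (hJnn : ∀ y, 0 ≤ J y) (hJ : IntegrableOn J T μ)
    (hnJ : IntegrableOn (fun y => ‖y‖ * J y) Ω μ)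
    (hf : IntegrableOn (fun y => ⟪p, y⟫ * exp ⟪p, y⟫ * J y) Ω μ) :
    a * exp a * ∫ y in T, J y ∂μ - ‖p‖ * ∫ y in Ω, ‖y‖ * J y ∂μ ≤
      ∫ y in Ω, ⟪p, y⟫ * exp ⟪p, y⟫ * J y ∂μ := by
  have hJT : IntegrableOn (T.indicator J) Ω μ := (hJ.integrable_indicator hT).integrableOn
  have hJTΩ : ∫ y in Ω, T.indicator J y ∂μ = ∫ y in T, J y ∂μ := by
    rw [setIntegral_indicator hT, inter_eq_self_of_subset_right hTΩ]
  rw [← hJTΩ, ← integral_const_mul, ← integral_const_mul,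
    ← integral_sub (hJT.const_mul _) (hnJ.const_mul _)]
  exact setIntegral_mono_on ((hJT.const_mul _).sub (hnJ.const_mul _)) hf hΩ
    fun y _ => indicator_sub_le_inner_mul_exp ha haT (hJnn y)

end Integral

section HaarMeasure

variable {E : Type*} [NormedAddCommGroup E] [MeasurableSpace E] [BorelSpace E] {μ : Measure E}
  {Ω : Set E} {J g : E → ℝ} {β : ℝ}

lemma integrableOn_mul_of_abs_le_exp (hJnn : ∀ y, 0 ≤ J y)
    (hJ : AEStronglyMeasurable J (μ.restrict Ω))
    (hexp : IntegrableOn (fun y => exp (β * ‖y‖) * J y) Ω μ) (hg : Continuous g)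
    (hgβ : ∀ y, |g y| ≤ exp (β * ‖y‖)) : IntegrableOn (fun y => g y * J y) Ω μ :=
  hexp.mono' (hg.aestronglyMeasurable.mul hJ) <| ae_of_all _ fun y => by
    rw [norm_mul, norm_of_nonneg (hJnn y), norm_eq_abs]
    exact mul_le_mul_of_nonneg_right (hgβ y) (hJnn y)

variable [InnerProductSpace ℝ E]

lemma integrableOn_inner_mul_exp_mul {p : E} (hp : p ≠ 0) (hJnn : ∀ y, 0 ≤ J y)
    (hJ : AEStronglyMeasurable J (μ.restrict Ω))
    (hexp : ∀ β > (0:ℝ), IntegrableOn (fun y => exp (β * ‖y‖) * J y) Ω μ) :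
    IntegrableOn (fun y => ⟪p, y⟫ * exp ⟪p, y⟫ * J y) Ω μ := by
  refine integrableOn_mul_of_abs_le_exp hJnn hJ (hexp (2 * ‖p‖) (by positivity)) (by fun_prop)
    fun y => (abs_mul_exp_le_exp_two_mul_abs _).trans (exp_le_exp.2 ?_)
  nlinarith [abs_real_inner_le_norm p y]

variable [FiniteDimensional ℝ E] (μ) [μ.IsAddHaarMeasure]

lemma mul_measureReal_ball_le_setIntegral_ball_smul {ρ m : ℝ} {v : E} (hv : ‖v‖ = 1)
    (hmJ : ∀ y : E, ρ / 2 ≤ ‖y‖ → ‖y‖ ≤ 3 * ρ / 4 → m ≤ J y)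
    (hJ : IntegrableOn J (ball ((5 * ρ / 8) • v) (ρ / 8)) μ) :
    m * μ.real (ball 0 (ρ / 8)) ≤ ∫ y in ball ((5 * ρ / 8) • v) (ρ / 8), J y ∂μ := by
  rw [← Measure.addHaar_real_ball_center μ ((5 * ρ / 8) • v)]
  exact setIntegral_ge_of_const_le_real measurableSet_ball measure_ball_lt_top.ne
    (fun y hy => hmJ y (lt_norm_of_mem_ball_smul hv hy).le (norm_lt_of_mem_ball_smul hv hy).le) hJ

theorem exists_mul_exp_sub_le_setIntegral_inner_mul_exp {ρ : ℝ} (hρ : 0 < ρ)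
    (hJnn : ∀ y, 0 ≤ J y) (hJcont : ContinuousOn J {0}ᶜ)
    (hJpos : ∀ y ∈ ball (0 : E) ρ \ {0}, 0 < J y)
    (hexp : ∀ β > (0:ℝ), IntegrableOn (fun y => exp (β * ‖y‖) * J y) {y | ρ / 2 < ‖y‖} μ) :
    ∃ c₁ > (0:ℝ), ∃ c₂ : ℝ, 0 ≤ c₂ ∧ ∀ p : E,
      c₁ * (ρ * ‖p‖ / 2) * exp (ρ * ‖p‖ / 2) - c₂ * ‖p‖ ≤
        ∫ y in {y | ρ / 2 < ‖y‖}, ⟪p, y⟫ * exp ⟪p, y⟫ * J y ∂μ := by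
  set Ω : Set E := {y | ρ / 2 < ‖y‖}
  have hΩ : IsOpen Ω := isOpen_lt continuous_const continuous_norm
  have hJΩ : AEStronglyMeasurable J (μ.restrict Ω) := by
    refine (hJcont.mono fun y (hy : ρ / 2 < ‖y‖) h0 => ?_).aestronglyMeasurable hΩ.measurableSet
    rw [mem_singleton_iff.1 h0, norm_zero] at hy
    linarith
  have hJ : IntegrableOn J Ω μ := by
    simpa only [one_mul] using integrableOn_mul_of_abs_le_exp (g := fun _ => 1) hJnn hJΩ
      (hexp 1 one_pos) continuous_const
      fun y => by rw [abs_one, one_mul]; exact one_le_exp (norm_nonneg y)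
  have hnJ : IntegrableOn (fun y => ‖y‖ * J y) Ω μ :=
    integrableOn_mul_of_abs_le_exp hJnn hJΩ (hexp 1 one_pos) continuous_norm
      fun y => by rw [abs_norm, one_mul]; linarith [add_one_le_exp ‖y‖]
  obtain ⟨m, hm, hmJ⟩ := exists_pos_le_of_mem_annulus (half_pos hρ)
    (by linarith : 3 * ρ / 4 < ρ) hJcont hJpos
  have hball : 0 < μ.real (ball 0 (ρ / 8)) :=
    ENNReal.toReal_pos (measure_ball_pos μ 0 (by positivity)).ne' measure_ball_lt_top.ne
  refine ⟨m * μ.real (ball 0 (ρ / 8)), mul_pos hm hball, ∫ y in Ω, ‖y‖ * J y ∂μ,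
    integral_nonneg fun y => mul_nonneg (norm_nonneg y) (hJnn y), fun p => ?_⟩
  rcases eq_or_ne p 0 with rfl | hp
  · simp
  set T := ball ((5 * ρ / 8) • (‖p‖⁻¹ • p)) (ρ / 8)
  have hv : ‖‖p‖⁻¹ • p‖ = 1 := norm_smul_inv_norm hp
  have hTΩ : T ⊆ Ω := fun y hy => lt_norm_of_mem_ball_smul hv hy
  have hmT : m * μ.real (ball 0 (ρ / 8)) ≤ ∫ y in T, J y ∂μ :=
    mul_measureReal_ball_le_setIntegral_ball_smul μ hv hmJ (hJ.mono_set hTΩ)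
  have key := mul_exp_mul_setIntegral_sub_le_setIntegral_inner_mul_exp (by positivity)
    measurableSet_ball hΩ.measurableSet hTΩ (fun y => mul_norm_le_inner_of_mem_ball_smul hp)
    hJnn (hJ.mono_set hTΩ) hnJ (integrableOn_inner_mul_exp_mul hp hJnn hJΩ hexp)
  nlinarith [mul_le_mul_of_nonneg_left hmT (by positivity : 0 ≤ ρ * ‖p‖ / 2 * exp (ρ * ‖p‖ / 2))]

end HaarMeasure

theorem stmt_4_general {N : ℕ}
    (J : EuclideanSpace ℝ (Fin N) → ℝ) (ρ₀ : ℝ) (hρ₀ : 0 < ρ₀)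
    (hJnn : ∀ y, 0 ≤ J y)
    (hJC1 : ContDiffOn ℝ 1 J {(0 : EuclideanSpace ℝ (Fin N))}ᶜ)
    (hJpos : ∀ y ∈ Metric.ball (0 : EuclideanSpace ℝ (Fin N)) ρ₀ \ {0}, 0 < J y)
    (hexp : ∀ β > (0:ℝ), IntegrableOn (fun y => Real.exp (β * ‖y‖) * J y)
      {y : EuclideanSpace ℝ (Fin N) | ρ₀ / 2 < ‖y‖}) :
    ∃ c₁ > (0:ℝ), ∃ c₂ : ℝ, 0 ≤ c₂ ∧
      ∀ p : EuclideanSpace ℝ (Fin N),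
        c₁ * (ρ₀ * ‖p‖ / 2) * Real.exp (ρ₀ * ‖p‖ / 2) - c₂ * ‖p‖ ≤
          ∫ y in {y : EuclideanSpace ℝ (Fin N) | ρ₀ / 2 < ‖y‖},
            ⟪p, y⟫ * Real.exp ⟪p, y⟫ * J y :=
  exists_mul_exp_sub_le_setIntegral_inner_mul_exp volume hρ₀ hJnn hJC1.continuousOn hJpos hexp

/-- `p · DH^ess(p) = ∫_{‖y‖>ρ₀/2} (p·y) e^{p·y} J(y) dy
  ≥ c₁(J) (ρ₀‖p‖/2) e^{ρ₀‖p‖/2} − c₂(J)‖p‖`. -/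
theorem stmt_4 {N : ℕ}
    (J : EuclideanSpace ℝ (Fin N) → ℝ) (ρ₀ : ℝ) (hρ₀ : 0 < ρ₀)
    (hJnn : ∀ y, 0 ≤ J y)
    (hJC1 : ContDiffOn ℝ 1 J {(0 : EuclideanSpace ℝ (Fin N))}ᶜ)
    (hJpos : ∀ y ∈ Metric.ball (0 : EuclideanSpace ℝ (Fin N)) ρ₀ \ {0}, 0 < J y)
    (hsupp : Metric.ball (0 : EuclideanSpace ℝ (Fin N)) ρ₀ ⊆ Function.support J)
    (hint : Integrable (fun y => min 1 (‖y‖ ^ 2) * J y))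
    (hexp : ∀ β > (0:ℝ), IntegrableOn (fun y => Real.exp (β * ‖y‖) * J y)
      {y : EuclideanSpace ℝ (Fin N) | ρ₀ / 2 < ‖y‖}) :
    ∃ c₁ > (0:ℝ), ∃ c₂ : ℝ, 0 ≤ c₂ ∧
      ∀ p : EuclideanSpace ℝ (Fin N),
        c₁ * (ρ₀ * ‖p‖ / 2) * Real.exp (ρ₀ * ‖p‖ / 2) - c₂ * ‖p‖ ≤
          ∫ y in {y : EuclideanSpace ℝ (Fin N) | ρ₀ / 2 < ‖y‖},
            ⟪p, y⟫ * Real.exp ⟪p, y⟫ * J y :=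
  stmt_4_general J ρ₀ hρ₀ hJnn hJC1 hJpos hexp
end

section
/- With H^ess(p) = ∫_{|y|>ρ₀/2} e^{p·y} J(y) dy, there exist ε > 0 and c(J) > 0 such that for every p ∈ ℝ^N and every unit vector ν ∈ ℝ^N: ν^T D²H^ess(p) ν ≥ ε c(J) e^{ρ₀|p|/2}. -/
open MeasureTheory Real Set Filter
open scoped RealInnerProductSpace

/-!
On a ball of radius `ρ₀/16` centred at `(3/4)ρ₀ u ± (ρ₀/8) ν`, where `u` is the direction of `p`,
every point lies in the annulus `11/16 ρ₀ ≤ ‖y‖ ≤ 15/16 ρ₀`, satisfies `⟪y, ν⟫² ≥ (ρ₀/16)²` and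
`⟪p, y⟫ ≥ ρ₀‖p‖/2`. On that compact annulus `J` is bounded below by some `m > 0`, so the integral is
at least `(ρ₀/16)² · m · vol(B_{ρ₀/16}) · e^{ρ₀‖p‖/2}`; the ball is translated, so its volume
does not depend on `p` or `ν`.
-/

lemma exists_pos_forall_le_of_le_norm_le {E : Type*} [NormedAddCommGroup E] [ProperSpace E]
    {J : E → ℝ} {ρ r₁ r₂ : ℝ} (hr₁ : 0 < r₁) (hr₂ : r₂ < ρ) (hJcont : ContinuousOn J {0}ᶜ)
    (hJpos : ∀ y ∈ Metric.ball (0 : E) ρ \ {0}, 0 < J y) :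
    ∃ m > 0, ∀ y : E, r₁ ≤ ‖y‖ → ‖y‖ ≤ r₂ → m ≤ J y := by
  set K := Metric.closedBall (0 : E) r₂ ∩ {y | r₁ ≤ ‖y‖}
  have hK : IsCompact K :=
    (isCompact_closedBall 0 r₂).inter_right (isClosed_le continuous_const continuous_norm)
  have hK0 : K ⊆ {0}ᶜ := fun y hy h0 => by
    have h : r₁ ≤ ‖y‖ := hy.2
    rw [mem_singleton_iff.1 h0, norm_zero] at h
    linarith
  have hKpos : ∀ y ∈ K, 0 < J y := fun y hy => hJpos y
    ⟨by simpa using (mem_closedBall_zero_iff.1 hy.1).trans_lt hr₂, hK0 hy⟩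
  obtain ⟨m, hm, hmJ⟩ := hK.exists_forall_le' (hJcont.mono hK0) hKpos
  exact ⟨m, hm, fun y h₁ h₂ => hmJ y ⟨mem_closedBall_zero_iff.2 h₂, h₁⟩⟩

section

variable {E : Type*} [NormedAddCommGroup E] [InnerProductSpace ℝ E]

lemma exists_norm_eq_one_and_eq_norm_smul {ν : E} (hν : ‖ν‖ = 1) (p : E) :
    ∃ u : E, ‖u‖ = 1 ∧ p = ‖p‖ • u := by
  by_cases hp : p = 0
  · exact ⟨ν, hν, by simp [hp]⟩
  · have hp' : ‖p‖ ≠ 0 := norm_ne_zero_iff.2 hp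
    refine ⟨‖p‖⁻¹ • p, ?_, ?_⟩
    · rw [norm_smul, norm_inv, norm_norm, inv_mul_cancel₀ hp']
    · rw [smul_smul, mul_inv_cancel₀ hp', one_smul]

lemma inner_sub_lt_inner_of_mem_ball {v y₀ y : E} {r : ℝ} (hv : ‖v‖ = 1)
    (hy : y ∈ Metric.ball y₀ r) : ⟪y₀, v⟫ - r < ⟪y, v⟫ := by
  have hle := abs_real_inner_le_norm (y - y₀) v
  rw [hv, mul_one, inner_sub_left] at hle
  rw [Metric.mem_ball, dist_eq_norm] at hy
  linarith [neg_abs_le (⟪y, v⟫ - ⟪y₀, v⟫)]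

lemma inner_bounds_of_mem_ball {ρ : ℝ} (hρ : 0 < ρ) {u ν : E} (hu : ‖u‖ = 1) (hν : ‖ν‖ = 1)
    (huν : 0 ≤ ⟪u, ν⟫) {y : E} (hy : y ∈ Metric.ball ((3 / 4 * ρ) • u + (ρ / 8) • ν) (ρ / 16)) :
    ρ / 16 ≤ ⟪y, ν⟫ ∧ 11 / 16 * ρ ≤ ⟪y, u⟫ ∧ ‖y‖ ≤ 15 / 16 * ρ := by
  set y₀ := (3 / 4 * ρ) • u + (ρ / 8) • ν
  have hy₀ν : ⟪y₀, ν⟫ = 3 / 4 * ρ * ⟪u, ν⟫ + ρ / 8 := by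
    simp only [y₀, inner_add_left, real_inner_smul_left, real_inner_self_eq_norm_sq, hν]
    ring
  have hy₀u : ⟪y₀, u⟫ = 3 / 4 * ρ + ρ / 8 * ⟪u, ν⟫ := by
    simp only [y₀, inner_add_left, real_inner_smul_left, real_inner_self_eq_norm_sq, hu,
      real_inner_comm u ν]
    ring
  have hy₀_norm : ‖y₀‖ ≤ 3 / 4 * ρ + ρ / 8 := by
    calc ‖y₀‖ ≤ ‖(3 / 4 * ρ) • u‖ + ‖(ρ / 8) • ν‖ := norm_add_le _ _
      _ = 3 / 4 * ρ + ρ / 8 := by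
        rw [norm_smul, norm_smul, hu, hν, norm_of_nonneg (by positivity),
          norm_of_nonneg (by positivity), mul_one, mul_one]
  have hdist : ‖y‖ < ‖y₀‖ + ρ / 16 := by
    rw [Metric.mem_ball, dist_eq_norm] at hy
    linarith [norm_le_norm_add_norm_sub' y y₀]
  have hν' := inner_sub_lt_inner_of_mem_ball hν hy
  have hu' := inner_sub_lt_inner_of_mem_ball hu hy
  refine ⟨?_, ?_, ?_⟩ <;> nlinarith

lemma exists_ball_forall_inner_bounds {ρ : ℝ} (hρ : 0 < ρ) (p : E) {ν : E} (hν : ‖ν‖ = 1) :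
    ∃ y₀ : E, ∀ y ∈ Metric.ball y₀ (ρ / 16), (ρ / 16) ^ 2 ≤ ⟪y, ν⟫ ^ 2 ∧
      ρ * ‖p‖ / 2 ≤ ⟪p, y⟫ ∧ 11 / 16 * ρ ≤ ‖y‖ ∧ ‖y‖ ≤ 15 / 16 * ρ := by
  obtain ⟨u, hu, hpu⟩ := exists_norm_eq_one_and_eq_norm_smul hν p
  obtain ⟨σ, hσ, huσν⟩ : ∃ σ : ℝ, |σ| = 1 ∧ 0 ≤ ⟪u, σ • ν⟫ := by
    rcases le_total 0 ⟪u, ν⟫ with h | h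
    · exact ⟨1, abs_one, by simpa using h⟩
    · exact ⟨-1, by simp, by simpa using h⟩
  have hσν : ‖σ • ν‖ = 1 := by rw [norm_smul, norm_eq_abs, hσ, hν, one_mul]
  refine ⟨(3 / 4 * ρ) • u + (ρ / 8) • (σ • ν), fun y hy => ?_⟩
  obtain ⟨hyν, hyu, hy_norm⟩ := inner_bounds_of_mem_ball hρ hu hσν huσν hy
  have hy_norm' : ⟪y, u⟫ ≤ ‖y‖ := (real_inner_le_norm y u).trans_eq (by rw [hu, mul_one])
  refine ⟨?_, ?_, hyu.trans hy_norm', hy_norm⟩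
  · have hσ2 : σ ^ 2 = 1 := by rw [← sq_abs, hσ, one_pow]
    calc (ρ / 16) ^ 2 ≤ ⟪y, σ • ν⟫ ^ 2 := pow_le_pow_left₀ (by positivity) hyν 2
      _ = ⟪y, ν⟫ ^ 2 := by rw [real_inner_smul_right, mul_pow, hσ2, one_mul]
  · have hpy : ⟪p, y⟫ = ‖p‖ * ⟪y, u⟫ := by
      rw [real_inner_comm u y]
      nth_rw 1 [hpu]
      rw [real_inner_smul_left]
    rw [hpy]
    nlinarith [norm_nonneg p]

lemma sq_inner_mul_exp_inner_le (p y : E) {ν : E} (hν : ‖ν‖ = 1) :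
    ⟪y, ν⟫ ^ 2 * exp ⟪p, y⟫ ≤ exp ((‖p‖ + 2) * ‖y‖) := by
  have hyν : ⟪y, ν⟫ ^ 2 ≤ exp ‖y‖ ^ 2 := by
    have h := abs_real_inner_le_norm y ν
    rw [hν, mul_one] at h
    rw [← sq_abs]
    gcongr
    linarith [add_one_le_exp ‖y‖]
  calc ⟪y, ν⟫ ^ 2 * exp ⟪p, y⟫ ≤ exp ‖y‖ ^ 2 * exp (‖p‖ * ‖y‖) := by
        gcongr
        exact real_inner_le_norm p y
    _ = exp ((‖p‖ + 2) * ‖y‖) := by rw [← exp_nat_mul, ← exp_add]; ring_nf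

lemma integrableOn_sq_inner_mul_exp_inner_mul [MeasurableSpace E] [OpensMeasurableSpace E]
    {μ : Measure E} {J : E → ℝ} {S : Set E} (hS : MeasurableSet S) (hJnn : ∀ y, 0 ≤ J y)
    (hJcont : ContinuousOn J S) (p : E) {ν : E} (hν : ‖ν‖ = 1)
    (hexp : IntegrableOn (fun y => exp ((‖p‖ + 2) * ‖y‖) * J y) S μ) :
    IntegrableOn (fun y => ⟪y, ν⟫ ^ 2 * exp ⟪p, y⟫ * J y) S μ := by
  refine hexp.mono' (ContinuousOn.aestronglyMeasurable ?_ hS) (ae_of_all _ fun y => ?_)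
  · exact (Continuous.continuousOn (by fun_prop)).mul hJcont
  · have hf : 0 ≤ ⟪y, ν⟫ ^ 2 * exp ⟪p, y⟫ * J y := by have := hJnn y; positivity
    rw [norm_of_nonneg hf]
    exact mul_le_mul_of_nonneg_right (sq_inner_mul_exp_inner_le p y hν) (hJnn y)

end

theorem stmt_5_general {N : ℕ}
    (J : EuclideanSpace ℝ (Fin N) → ℝ) (ρ₀ : ℝ) (hρ₀ : 0 < ρ₀)
    (hJnn : ∀ y, 0 ≤ J y)
    (hJcont : ContinuousOn J {(0 : EuclideanSpace ℝ (Fin N))}ᶜ)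
    (hJpos : ∀ y ∈ Metric.ball (0 : EuclideanSpace ℝ (Fin N)) ρ₀ \ {0}, 0 < J y)
    (hexp : ∀ β > (0:ℝ), IntegrableOn (fun y => Real.exp (β * ‖y‖) * J y)
      {y : EuclideanSpace ℝ (Fin N) | ρ₀ / 2 < ‖y‖}) :
    ∃ ε > (0:ℝ), ∃ c > (0:ℝ),
      ∀ (p ν : EuclideanSpace ℝ (Fin N)), ‖ν‖ = 1 →
        ε * c * Real.exp (ρ₀ * ‖p‖ / 2) ≤
          ∫ y in {y : EuclideanSpace ℝ (Fin N) | ρ₀ / 2 < ‖y‖},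
            ⟪y, ν⟫ ^ 2 * Real.exp ⟪p, y⟫ * J y := by
  set S := {y : EuclideanSpace ℝ (Fin N) | ρ₀ / 2 < ‖y‖}
  set B := Metric.ball (0 : EuclideanSpace ℝ (Fin N)) (ρ₀ / 16)
  obtain ⟨m, hm, hJm⟩ := exists_pos_forall_le_of_le_norm_le (r₁ := 11 / 16 * ρ₀)
    (r₂ := 15 / 16 * ρ₀) (by positivity) (by linarith) hJcont hJpos
  have hB : 0 < volume.real B :=
    ENNReal.toReal_pos (Metric.measure_ball_pos _ _ (by positivity)).ne' measure_ball_lt_top.ne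
  refine ⟨(ρ₀ / 16) ^ 2, by positivity, m * volume.real B, by positivity, fun p ν hν => ?_⟩
  obtain ⟨y₀, hy₀⟩ := exists_ball_forall_inner_bounds hρ₀ p hν
  have hS : MeasurableSet S := measurableSet_lt measurable_const measurable_norm
  have hball : Metric.ball y₀ (ρ₀ / 16) ⊆ S := fun y hy => by
    show ρ₀ / 2 < ‖y‖
    linarith [(hy₀ y hy).2.2.1]
  have hint := integrableOn_sq_inner_mul_exp_inner_mul hS hJnn
    (hJcont.mono fun y (hy : ρ₀ / 2 < ‖y‖) h0 => by
      rw [mem_singleton_iff.1 h0, norm_zero] at hy; linarith) p hν (hexp _ (by positivity))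
  calc (ρ₀ / 16) ^ 2 * (m * volume.real B) * exp (ρ₀ * ‖p‖ / 2)
      = (ρ₀ / 16) ^ 2 * exp (ρ₀ * ‖p‖ / 2) * m * volume.real (Metric.ball y₀ (ρ₀ / 16)) := by
        rw [Measure.addHaar_real_ball_center volume y₀]; ring
    _ ≤ ∫ y in Metric.ball y₀ (ρ₀ / 16), ⟪y, ν⟫ ^ 2 * exp ⟪p, y⟫ * J y := by
        refine setIntegral_ge_of_const_le_real measurableSet_ball measure_ball_lt_top.ne
          (fun y hy => ?_) (hint.mono_set hball)
        obtain ⟨hyν, hpy, hy₁, hy₂⟩ := hy₀ y hy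
        gcongr
        exact hJm y hy₁ hy₂
    _ ≤ ∫ y in S, ⟪y, ν⟫ ^ 2 * exp ⟪p, y⟫ * J y :=
        setIntegral_mono_set hint (ae_of_all _ fun y => by have := hJnn y; positivity)
          hball.eventuallyLE

/-- there exist `ε > 0` and `c(J) > 0` with
`ν^T D²H^ess(p) ν = ∫_{‖y‖>ρ₀/2} ⟨y,ν⟩² e^{p·y} J(y) dy ≥ ε c(J) e^{ρ₀‖p‖/2}`
for every `p` and unit vector `ν`. -/
theorem stmt_5 {N : ℕ}
    (J : EuclideanSpace ℝ (Fin N) → ℝ) (ρ₀ : ℝ) (hρ₀ : 0 < ρ₀)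
    (hJnn : ∀ y, 0 ≤ J y)
    (hJC1 : ContDiffOn ℝ 1 J {(0 : EuclideanSpace ℝ (Fin N))}ᶜ)
    (hJcont : ContinuousOn J {(0 : EuclideanSpace ℝ (Fin N))}ᶜ)
    (hJpos : ∀ y ∈ Metric.ball (0 : EuclideanSpace ℝ (Fin N)) ρ₀ \ {0}, 0 < J y)
    (hint : Integrable (fun y => min 1 (‖y‖ ^ 2) * J y))
    (hexp : ∀ β > (0:ℝ), IntegrableOn (fun y => Real.exp (β * ‖y‖) * J y)
      {y : EuclideanSpace ℝ (Fin N) | ρ₀ / 2 < ‖y‖}) :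
    ∃ ε > (0:ℝ), ∃ c > (0:ℝ),
      ∀ (p ν : EuclideanSpace ℝ (Fin N)), ‖ν‖ = 1 →
        ε * c * Real.exp (ρ₀ * ‖p‖ / 2) ≤
          ∫ y in {y : EuclideanSpace ℝ (Fin N) | ρ₀ / 2 < ‖y‖},
            ⟪y, ν⟫ ^ 2 * Real.exp ⟪p, y⟫ * J y :=
  stmt_5_general J ρ₀ hρ₀ hJnn hJcont hJpos hexp
end

section
/- For every γ ∈ (0, ρ₀), the essential Hamiltonian satisfies the bound H^ess(p) ≤ c(J)/γ + (p · DH^ess(p))/(γ|p|) + e^{γ|p|} for all p ≠ 0, where c(J) = ∫_{|y|>ρ₀/2} |y| J(y) dy plus the total mass ∫_{|y|>ρ₀/2} J(y) dy times suitable constants. -/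
open MeasureTheory Real Set Filter
open scoped RealInnerProductSpace

set_option maxHeartbeats 2000000 in
/-- for every `γ ∈ (0,ρ₀)` and `p ≠ 0`,
`H^ess(p) ≤ c(J)/γ + (p·DH^ess(p))/(γ‖p‖) + e^{γ‖p‖}` for some constant `c(J) ≥ 0`. -/
theorem stmt_6 {N : ℕ}
    (J : EuclideanSpace ℝ (Fin N) → ℝ) (ρ₀ : ℝ) (hρ₀ : 0 < ρ₀)
    (hJnn : ∀ y, 0 ≤ J y)
    (hJC1 : ContDiffOn ℝ 1 J {(0 : EuclideanSpace ℝ (Fin N))}ᶜ)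
    (hsupp : Metric.ball (0 : EuclideanSpace ℝ (Fin N)) ρ₀ ⊆ Function.support J)
    (hint : Integrable (fun y => min 1 (‖y‖ ^ 2) * J y))
    (hexp : ∀ β > (0:ℝ), IntegrableOn (fun y => Real.exp (β * ‖y‖) * J y)
      {y : EuclideanSpace ℝ (Fin N) | ρ₀ / 2 < ‖y‖}) :
    ∃ c : ℝ, 0 ≤ c ∧
      ∀ γ : ℝ, 0 < γ → γ < ρ₀ → ∀ p : EuclideanSpace ℝ (Fin N), p ≠ 0 →
        (∫ y in {y : EuclideanSpace ℝ (Fin N) | ρ₀ / 2 < ‖y‖},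
            Real.exp ⟪p, y⟫ * J y) ≤
          c / γ +
          (∫ y in {y : EuclideanSpace ℝ (Fin N) | ρ₀ / 2 < ‖y‖},
            ⟪p, y⟫ * Real.exp ⟪p, y⟫ * J y) / (γ * ‖p‖) +
          Real.exp (γ * ‖p‖) := by
  classical
  set D : Set (EuclideanSpace ℝ (Fin N)) := {y | ρ₀ / 2 < ‖y‖} with hDdef
  have hDmeas : MeasurableSet D := by
    have h : D = (fun y : EuclideanSpace ℝ (Fin N) => ‖y‖) ⁻¹' Ioi (ρ₀ / 2) := rfl
    rw [h]
    exact measurable_norm measurableSet_Ioi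
  have hJae : AEStronglyMeasurable J (volume.restrict D) := by
    have hsub : D ⊆ {(0 : EuclideanSpace ℝ (Fin N))}ᶜ := by
      intro y hy
      simp only [mem_compl_iff, mem_singleton_iff]
      intro h
      rw [hDdef, mem_setOf_eq, h, norm_zero] at hy
      linarith
    exact (hJC1.continuousOn.mono hsub).aestronglyMeasurable hDmeas
  -- generic integrability criterion
  have mono_int : ∀ (f : EuclideanSpace ℝ (Fin N) → ℝ) (β : ℝ), 0 < β →
      AEStronglyMeasurable f (volume.restrict D) →
      (∀ y, |f y| ≤ Real.exp (β * ‖y‖) * J y) → IntegrableOn f D := by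
    intro f β hβ hmeas hb
    refine Integrable.mono (hexp β hβ) hmeas ?_
    filter_upwards with y
    rw [Real.norm_eq_abs, Real.norm_eq_abs,
      abs_of_nonneg (mul_nonneg (Real.exp_pos _).le (hJnn y))]
    exact hb y
  have hIJ : IntegrableOn J D := by
    refine mono_int J 1 one_pos hJae fun y => ?_
    rw [abs_of_nonneg (hJnn y)]
    nlinarith [Real.one_le_exp (by positivity : (0:ℝ) ≤ 1 * ‖y‖), hJnn y]
  have hIL : IntegrableOn (fun y => ‖y‖ * J y) D := by
    refine mono_int _ 1 one_pos (continuous_norm.aestronglyMeasurable.mul hJae) fun y => ?_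
    rw [abs_of_nonneg (mul_nonneg (norm_nonneg y) (hJnn y))]
    have h1 : ‖y‖ ≤ Real.exp (1 * ‖y‖) := by
      nlinarith [Real.add_one_le_exp (1 * ‖y‖)]
    exact mul_le_mul_of_nonneg_right h1 (hJnn y)
  set μ : ℝ := ∫ y in D, J y with hμdef
  set L : ℝ := ∫ y in D, ‖y‖ * J y with hLdef
  have hμ0 : 0 ≤ μ := setIntegral_nonneg hDmeas fun y _ => hJnn y
  have hL0 : 0 ≤ L := setIntegral_nonneg hDmeas fun y _ =>
    mul_nonneg (norm_nonneg y) (hJnn y)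
  refine ⟨L + ρ₀ * μ * (2 + Real.exp μ), by positivity, ?_⟩
  intro γ hγ0 hγρ p hp
  have hpn : 0 < ‖p‖ := norm_pos_iff.mpr hp
  set s : ℝ := γ * ‖p‖ with hsdef
  have hs : 0 < s := mul_pos hγ0 hpn
  have hcontin : Continuous fun y : EuclideanSpace ℝ (Fin N) => ⟪p, y⟫ :=
    continuous_const.inner continuous_id
  have hcont1 : Continuous fun y : EuclideanSpace ℝ (Fin N) => Real.exp ⟪p, y⟫ :=
    Real.continuous_exp.comp hcontin
  have hI1 : IntegrableOn (fun y => Real.exp ⟪p, y⟫ * J y) D := by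
    refine mono_int _ ‖p‖ hpn (hcont1.aestronglyMeasurable.mul hJae) fun y => ?_
    rw [abs_mul, abs_of_nonneg (hJnn y), abs_of_nonneg (Real.exp_pos _).le]
    exact mul_le_mul_of_nonneg_right
      (Real.exp_le_exp.mpr (real_inner_le_norm p y)) (hJnn y)
  have hI2 : IntegrableOn (fun y => ⟪p, y⟫ * Real.exp ⟪p, y⟫ * J y) D := by
    refine mono_int _ (2 * ‖p‖) (by positivity)
      ((hcontin.mul hcont1).aestronglyMeasurable.mul hJae) fun y => ?_
    rw [abs_mul, abs_mul, abs_of_nonneg (hJnn y), abs_of_nonneg (Real.exp_pos _).le]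
    have h1 : |⟪p, y⟫| ≤ ‖p‖ * ‖y‖ := abs_real_inner_le_norm p y
    have h2 : Real.exp ⟪p, y⟫ ≤ Real.exp (‖p‖ * ‖y‖) :=
      Real.exp_le_exp.mpr (real_inner_le_norm p y)
    have h3 : ‖p‖ * ‖y‖ ≤ Real.exp (‖p‖ * ‖y‖) := by
      nlinarith [Real.add_one_le_exp (‖p‖ * ‖y‖)]
    have h4 : |⟪p, y⟫| * Real.exp ⟪p, y⟫ ≤
        Real.exp (‖p‖ * ‖y‖) * Real.exp (‖p‖ * ‖y‖) := by
      have h0 := abs_nonneg ⟪p, y⟫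
      nlinarith [Real.exp_pos ⟪p, y⟫, Real.exp_pos (‖p‖ * ‖y‖)]
    have h5 : Real.exp (‖p‖ * ‖y‖) * Real.exp (‖p‖ * ‖y‖) = Real.exp (2 * ‖p‖ * ‖y‖) := by
      rw [← Real.exp_add]; ring_nf
    rw [h5] at h4
    exact mul_le_mul_of_nonneg_right h4 (hJnn y)
  set M : ℝ := if s ≤ 1 then 1 else Real.exp (s - 1) / s with hMdef
  have hM0 : 0 ≤ M := by
    rw [hMdef]; split
    · norm_num
    · positivity
  -- pointwise bound
  have hpt : ∀ y ∈ D,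
      Real.exp ⟪p, y⟫ * J y - ⟪p, y⟫ * Real.exp ⟪p, y⟫ * J y / s ≤
        (1 + M) * J y + (1 / γ) * (‖y‖ * J y) := by
    intro y _
    have hJy := hJnn y
    set t : ℝ := ⟪p, y⟫ with htdef
    have habs : |t| ≤ ‖p‖ * ‖y‖ := abs_real_inner_le_norm p y
    have hyg : 0 ≤ ‖y‖ / γ := by positivity
    have key : Real.exp t * (s - t) / s ≤ 1 + M + ‖y‖ / γ := by
      rcases le_or_gt t 0 with ht | ht
      · -- t ≤ 0
        have h1 : Real.exp t ≤ 1 := Real.exp_le_one_iff.mpr ht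
        have h3 : -t ≤ ‖p‖ * ‖y‖ := le_trans (neg_le_abs t) habs
        have h2 : Real.exp t * (-t) ≤ ‖p‖ * ‖y‖ := by
          nlinarith [Real.exp_pos t]
        have h4 : ‖y‖ / γ * s = ‖y‖ * ‖p‖ := by
          rw [hsdef]; field_simp
        rw [div_le_iff₀ hs]
        nlinarith [mul_nonneg hM0 hs.le, mul_le_mul_of_nonneg_right h1 hs.le]
      · rcases le_or_gt s t with hst | hts
        · -- s ≤ t : LHS ≤ 0
          have hle : Real.exp t * (s - t) / s ≤ 0 := by
            apply div_nonpos_of_nonpos_of_nonneg _ hs.le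
            exact mul_nonpos_of_nonneg_of_nonpos (Real.exp_pos t).le (by linarith)
          linarith
        · -- 0 < t < s
          have hMcase : Real.exp t * (s - t) / s ≤ M := by
            rw [hMdef]
            split_ifs with hs1
            · rw [div_le_one hs]
              have hA : Real.exp t * (1 - t) ≤ 1 := by
                have h := Real.add_one_le_exp (-t)
                rw [Real.exp_neg] at h
                have hep := Real.exp_pos t
                have h' := mul_le_mul_of_nonneg_left h hep.le
                rw [mul_inv_cancel₀ hep.ne'] at h'
                linarith
              nlinarith [Real.exp_pos t]
            · have hB : Real.exp t * (s - t) ≤ Real.exp (s - 1) := by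
                have h := Real.add_one_le_exp (s - t - 1)
                have h2 : s - t ≤ Real.exp (s - t - 1) := by linarith
                calc Real.exp t * (s - t) ≤ Real.exp t * Real.exp (s - t - 1) :=
                      mul_le_mul_of_nonneg_left h2 (Real.exp_pos t).le
                  _ = Real.exp (s - 1) := by rw [← Real.exp_add]; ring_nf
              gcongr
          linarith
    have heq : Real.exp t * J y - t * Real.exp t * J y / s =
        (Real.exp t * (s - t) / s) * J y := by
      field_simp
    rw [heq]
    calc (Real.exp t * (s - t) / s) * J y ≤ (1 + M + ‖y‖ / γ) * J y :=
          mul_le_mul_of_nonneg_right key hJy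
      _ = (1 + M) * J y + (1 / γ) * (‖y‖ * J y) := by ring
  have hIsub : IntegrableOn
      (fun y => Real.exp ⟪p, y⟫ * J y - ⟪p, y⟫ * Real.exp ⟪p, y⟫ * J y / s) D :=
    hI1.sub (hI2.div_const s)
  have hIrhs : IntegrableOn (fun y => (1 + M) * J y + (1 / γ) * (‖y‖ * J y)) D :=
    (hIJ.const_mul _).add (hIL.const_mul _)
  have hmono := setIntegral_mono_on hIsub hIrhs hDmeas hpt
  rw [integral_sub hI1 (hI2.div_const s), integral_div,
    integral_add (hIJ.const_mul _) (hIL.const_mul _),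
    integral_const_mul, integral_const_mul] at hmono
  -- final arithmetic
  have e1 : μ ≤ ρ₀ * μ / γ := by
    rw [le_div_iff₀ hγ0]; nlinarith
  have hd : 0 ≤ ρ₀ * μ * Real.exp μ / γ := by positivity
  have e2 : M * μ ≤ Real.exp s + ρ₀ * μ * Real.exp μ / γ := by
    have hexps := Real.exp_pos s
    rw [hMdef]; split_ifs with hs1
    · have h1 : (1:ℝ) ≤ Real.exp μ := Real.one_le_exp hμ0
      have h2 : 1 * μ ≤ ρ₀ * μ * Real.exp μ / γ := by
        rw [one_mul, le_div_iff₀ hγ0]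
        nlinarith [mul_nonneg hμ0 (sub_nonneg.mpr hγρ.le),
          mul_nonneg (mul_nonneg hρ₀.le hμ0) (sub_nonneg.mpr h1)]
      linarith
    · push_neg at hs1
      rcases le_or_gt μ (Real.exp 1 * s) with hμs | hμs
      · have h1 : Real.exp (s - 1) / s * μ ≤ Real.exp (s - 1) * Real.exp 1 := by
          rw [div_mul_eq_mul_div, div_le_iff₀ hs, mul_assoc]
          exact mul_le_mul_of_nonneg_left hμs (Real.exp_pos (s - 1)).le
        have h2 : Real.exp (s - 1) * Real.exp 1 = Real.exp s := by
          rw [← Real.exp_add]; ring_nf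
        linarith
      · have he1 : (1:ℝ) ≤ Real.exp 1 := Real.one_le_exp zero_le_one
        have hsμ : s ≤ μ := by nlinarith [mul_le_mul_of_nonneg_right he1 hs.le]
        have h3 : Real.exp (s - 1) / s ≤ Real.exp μ := by
          calc Real.exp (s - 1) / s ≤ Real.exp (s - 1) :=
                div_le_self (Real.exp_pos _).le hs1.le
            _ ≤ Real.exp μ := Real.exp_le_exp.mpr (by linarith)
        have h4 : Real.exp (s - 1) / s * μ ≤ Real.exp μ * μ :=
          mul_le_mul_of_nonneg_right h3 hμ0
        have h5 : Real.exp μ * μ ≤ ρ₀ * μ * Real.exp μ / γ := by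
          rw [le_div_iff₀ hγ0]
          nlinarith [mul_nonneg (sub_nonneg.mpr hγρ.le) (mul_nonneg hμ0 (Real.exp_pos μ).le)]
        linarith
  have e3 : (L + ρ₀ * μ * (2 + Real.exp μ)) / γ =
      L / γ + 2 * (ρ₀ * μ / γ) + ρ₀ * μ * Real.exp μ / γ := by
    field_simp
    ring
  have e4 : (1 / γ) * L = L / γ := by ring
  rw [e3]
  linarith [hmono, e1, e2, hμ0]
end

section
/- The essential Hamiltonian is negligible compared to the radial derivative term at infinity: lim_{|p|→∞} H^ess(p) / (p · DH^ess(p)) = 0. -/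
open MeasureTheory Real Set Filter
open scoped RealInnerProductSpace ENNReal

section Aux
variable {N : ℕ}
local notation "E" => EuclideanSpace ℝ (Fin N)

lemma stmt7_measA (ρ₀ : ℝ) : MeasurableSet {y : E | ρ₀/2 < ‖y‖} :=
  (isOpen_lt continuous_const continuous_norm).measurableSet

lemma stmt7_subA {ρ₀ : ℝ} (hρ₀ : 0 < ρ₀) : {y : E | ρ₀/2 < ‖y‖} ⊆ {(0:E)}ᶜ := by
  intro y hy
  simp only [mem_setOf_eq] at hy
  simp only [mem_compl_iff, mem_singleton_iff]
  intro h
  rw [h, norm_zero] at hy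
  linarith

lemma stmt7_contJ {J : E → ℝ} {ρ₀ : ℝ} (hρ₀ : 0 < ρ₀)
    (hJC1 : ContDiffOn ℝ 1 J {(0 : E)}ᶜ) :
    ContinuousOn J {y : E | ρ₀/2 < ‖y‖} :=
  hJC1.continuousOn.mono (stmt7_subA hρ₀)

lemma stmt7_intJ {J : E → ℝ} {ρ₀ : ℝ} (hρ₀ : 0 < ρ₀) (hJnn : ∀ y, 0 ≤ J y)
    (hJC1 : ContDiffOn ℝ 1 J {(0 : E)}ᶜ)
    (hint : Integrable (fun y : E => min 1 (‖y‖ ^ 2) * J y)) :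
    IntegrableOn J {y : E | ρ₀/2 < ‖y‖} := by
  set c₀ : ℝ := min 1 ((ρ₀/2)^2) with hc₀
  have hc₀pos : 0 < c₀ := lt_min one_pos (by positivity)
  apply Integrable.mono' ((hint.const_mul c₀⁻¹).integrableOn)
  · exact (stmt7_contJ hρ₀ hJC1).aestronglyMeasurable (stmt7_measA ρ₀)
  · rw [ae_restrict_iff' (stmt7_measA ρ₀)]
    filter_upwards with y hy
    have hy' : ρ₀/2 < ‖y‖ := hy
    have h1 : c₀ ≤ min 1 (‖y‖^2) := by
      apply min_le_min le_rfl
      nlinarith [norm_nonneg y]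
    rw [Real.norm_eq_abs, abs_of_nonneg (hJnn y)]
    rw [inv_mul_eq_div, le_div_iff₀ hc₀pos]
    nlinarith [hJnn y]


lemma stmt7_contInner (p : E) : Continuous (fun y : E => (⟪p, y⟫ : ℝ)) :=
  continuous_const.inner continuous_id

lemma stmt7_intExp {J : E → ℝ} {ρ₀ : ℝ} (hρ₀ : 0 < ρ₀) (hJnn : ∀ y, 0 ≤ J y)
    (hJC1 : ContDiffOn ℝ 1 J {(0 : E)}ᶜ)
    (hexp : ∀ β > (0:ℝ), IntegrableOn (fun y : E => Real.exp (β * ‖y‖) * J y)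
      {y : E | ρ₀ / 2 < ‖y‖}) (p : E) :
    IntegrableOn (fun y : E => Real.exp ⟪p, y⟫ * J y) {y : E | ρ₀/2 < ‖y‖} := by
  apply Integrable.mono' (hexp (‖p‖ + 1) (by positivity))
  · exact ((Real.continuous_exp.comp (stmt7_contInner p)).continuousOn.mul
      (stmt7_contJ hρ₀ hJC1)).aestronglyMeasurable (stmt7_measA ρ₀)
  · filter_upwards with y
    have h1 : (⟪p, y⟫ : ℝ) ≤ (‖p‖ + 1) * ‖y‖ := by
      have := abs_real_inner_le_norm p y
      have hn := norm_nonneg y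
      cases' abs_le.mp this with h2 h3
      nlinarith
    have h2 := Real.exp_le_exp.mpr h1
    rw [Real.norm_eq_abs, abs_of_nonneg (mul_nonneg (Real.exp_pos _).le (hJnn y))]
    exact mul_le_mul_of_nonneg_right h2 (hJnn y)

lemma stmt7_intMul {J : E → ℝ} {ρ₀ : ℝ} (hρ₀ : 0 < ρ₀) (hJnn : ∀ y, 0 ≤ J y)
    (hJC1 : ContDiffOn ℝ 1 J {(0 : E)}ᶜ)
    (hexp : ∀ β > (0:ℝ), IntegrableOn (fun y : E => Real.exp (β * ‖y‖) * J y)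
      {y : E | ρ₀ / 2 < ‖y‖}) (p : E) :
    IntegrableOn (fun y : E => ⟪p, y⟫ * Real.exp ⟪p, y⟫ * J y) {y : E | ρ₀/2 < ‖y‖} := by
  apply Integrable.mono' (((hexp (‖p‖ + 2) (by positivity))).const_mul ‖p‖)
  · exact (((stmt7_contInner p).mul
      (Real.continuous_exp.comp (stmt7_contInner p))).continuousOn.mul
      (stmt7_contJ hρ₀ hJC1)).aestronglyMeasurable (stmt7_measA ρ₀)
  · filter_upwards with y
    have hn := norm_nonneg y
    have habs : |(⟪p, y⟫ : ℝ)| ≤ ‖p‖ * ‖y‖ := abs_real_inner_le_norm p y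
    have h1 : (⟪p, y⟫ : ℝ) ≤ ‖p‖ * ‖y‖ := (abs_le.mp habs).2
    have hyexp : ‖y‖ ≤ Real.exp ‖y‖ := by
      have := Real.add_one_le_exp ‖y‖; linarith
    rw [Real.norm_eq_abs, abs_mul, abs_of_nonneg (hJnn y), abs_mul,
      abs_of_nonneg (Real.exp_pos _).le]
    have h2 : Real.exp ⟪p,y⟫ ≤ Real.exp (‖p‖ * ‖y‖) := Real.exp_le_exp.mpr h1
    have h3 : |(⟪p, y⟫ : ℝ)| * Real.exp ⟪p,y⟫ ≤ (‖p‖ * ‖y‖) * Real.exp (‖p‖ * ‖y‖) := by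
      apply mul_le_mul habs h2 (Real.exp_pos _).le (by positivity)
    have h4 : (‖p‖ * ‖y‖) * Real.exp (‖p‖ * ‖y‖) ≤ ‖p‖ * Real.exp ((‖p‖ + 2) * ‖y‖) := by
      have h5 : ‖y‖ * Real.exp (‖p‖ * ‖y‖) ≤ Real.exp ((‖p‖+2) * ‖y‖) := by
        calc ‖y‖ * Real.exp (‖p‖ * ‖y‖) ≤ Real.exp ‖y‖ * Real.exp (‖p‖ * ‖y‖) :=
              mul_le_mul_of_nonneg_right hyexp (Real.exp_pos _).le
        _ = Real.exp (‖y‖ + ‖p‖ * ‖y‖) := (Real.exp_add _ _).symm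
        _ ≤ Real.exp ((‖p‖+2) * ‖y‖) := Real.exp_le_exp.mpr (by nlinarith [norm_nonneg p])
      calc (‖p‖ * ‖y‖) * Real.exp (‖p‖ * ‖y‖) = ‖p‖ * (‖y‖ * Real.exp (‖p‖ * ‖y‖)) := by ring
      _ ≤ ‖p‖ * Real.exp ((‖p‖+2) * ‖y‖) :=
          mul_le_mul_of_nonneg_left h5 (norm_nonneg p)
    calc |(⟪p, y⟫:ℝ)| * Real.exp ⟪p,y⟫ * J y ≤ (‖p‖ * Real.exp ((‖p‖+2)*‖y‖)) * J y := by
          apply mul_le_mul_of_nonneg_right (le_trans h3 h4) (hJnn y)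
    _ = ‖p‖ * (Real.exp ((‖p‖+2)*‖y‖) * J y) := by ring


noncomputable def stmt7_phi (ρ₀ : ℝ) (v y : E) : ℝ := max 0 (1 - ‖y - v‖ / (ρ₀/16))

lemma stmt7_phi_nonneg (ρ₀ : ℝ) (v y : E) : 0 ≤ stmt7_phi ρ₀ v y := le_max_left _ _

lemma stmt7_phi_le_one {ρ₀ : ℝ} (hρ₀ : 0 < ρ₀) (v y : E) : stmt7_phi ρ₀ v y ≤ 1 := by
  apply max_le (by norm_num)
  have : 0 ≤ ‖y - v‖ / (ρ₀/16) := by positivity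
  linarith

lemma stmt7_phi_supp {ρ₀ : ℝ} (hρ₀ : 0 < ρ₀) {v y : E} (h : 0 < stmt7_phi ρ₀ v y) :
    ‖y - v‖ < ρ₀/16 := by
  by_contra hc
  push_neg at hc
  have : ‖y - v‖ / (ρ₀/16) ≥ 1 := by
    rw [ge_iff_le, le_div_iff₀ (by positivity)]
    linarith
  have : stmt7_phi ρ₀ v y = 0 := max_eq_left (by linarith)
  linarith

lemma stmt7_phi_half {ρ₀ : ℝ} (hρ₀ : 0 < ρ₀) {v y : E} (h : ‖y - v‖ < ρ₀/32) :
    (1/2 : ℝ) ≤ stmt7_phi ρ₀ v y := by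
  apply le_max_of_le_right
  have : ‖y - v‖ / (ρ₀/16) ≤ 1/2 := by
    rw [div_le_iff₀ (by positivity)]
    linarith
  linarith

lemma stmt7_phi_cont (ρ₀ : ℝ) (v : E) : Continuous (stmt7_phi ρ₀ v) := by
  apply continuous_const.max
  exact continuous_const.sub ((continuous_id.sub continuous_const).norm.div_const _)

lemma stmt7_phi_lip {ρ₀ : ℝ} (hρ₀ : 0 < ρ₀) (v w y : E) :
    |stmt7_phi ρ₀ v y - stmt7_phi ρ₀ w y| ≤ ‖v - w‖ / (ρ₀/16) := by
  have h1 : |stmt7_phi ρ₀ v y - stmt7_phi ρ₀ w y| ≤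
      |(1 - ‖y - v‖ / (ρ₀/16)) - (1 - ‖y - w‖ / (ρ₀/16))| := by
    simp only [stmt7_phi, max_comm (0:ℝ)]
    exact abs_max_sub_max_le_abs _ _ _
  calc |stmt7_phi ρ₀ v y - stmt7_phi ρ₀ w y|
      ≤ |(1 - ‖y - v‖ / (ρ₀/16)) - (1 - ‖y - w‖ / (ρ₀/16))| := h1
    _ = |‖y - w‖ - ‖y - v‖| / (ρ₀/16) := by
        have he : (1 - ‖y - v‖ / (ρ₀/16)) - (1 - ‖y - w‖ / (ρ₀/16))
            = (‖y - w‖ - ‖y - v‖) / (ρ₀/16) := by ring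
        rw [he, abs_div, abs_of_pos (by positivity : (0:ℝ) < ρ₀/16)]
      _ ≤ ‖v - w‖ / (ρ₀/16) := by
        apply div_le_div_of_nonneg_right _ (by positivity)
        have := abs_norm_sub_norm_le (y - w) (y - v)
        have heq : (y - w) - (y - v) = v - w := by abel
        rwa [heq] at this

noncomputable def stmt7_F (J : E → ℝ) (ρ₀ : ℝ) (v : E) : ℝ :=
  ∫ y in {y : E | ρ₀/2 < ‖y‖}, stmt7_phi ρ₀ v y * J y

lemma stmt7_intPhiJ {J : E → ℝ} {ρ₀ : ℝ} (hρ₀ : 0 < ρ₀) (hJnn : ∀ y, 0 ≤ J y)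
    (hJC1 : ContDiffOn ℝ 1 J {(0 : E)}ᶜ)
    (hint : Integrable (fun y : E => min 1 (‖y‖ ^ 2) * J y)) (v : E) :
    IntegrableOn (fun y : E => stmt7_phi ρ₀ v y * J y) {y : E | ρ₀/2 < ‖y‖} := by
  apply Integrable.mono' (stmt7_intJ hρ₀ hJnn hJC1 hint)
  · exact ((stmt7_phi_cont ρ₀ v).continuousOn.mul
      (stmt7_contJ hρ₀ hJC1)).aestronglyMeasurable (stmt7_measA ρ₀)
  · filter_upwards with y
    rw [Real.norm_eq_abs, abs_of_nonneg (mul_nonneg (stmt7_phi_nonneg ρ₀ v y) (hJnn y))]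
    nlinarith [stmt7_phi_le_one hρ₀ v y, hJnn y, stmt7_phi_nonneg ρ₀ v y]

lemma stmt7_F_cont {J : E → ℝ} {ρ₀ : ℝ} (hρ₀ : 0 < ρ₀) (hJnn : ∀ y, 0 ≤ J y)
    (hJC1 : ContDiffOn ℝ 1 J {(0 : E)}ᶜ)
    (hint : Integrable (fun y : E => min 1 (‖y‖ ^ 2) * J y)) :
    Continuous (stmt7_F J ρ₀) := by
  set J₀ : ℝ := ∫ y in {y : E | ρ₀/2 < ‖y‖}, J y with hJ₀
  have hJ₀nn : 0 ≤ J₀ := setIntegral_nonneg (stmt7_measA ρ₀) (fun y _ => hJnn y)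
  have key : ∀ v w : E, dist (stmt7_F J ρ₀ v) (stmt7_F J ρ₀ w) ≤ (J₀ / (ρ₀/16)) * dist v w := by
    intro v w
    rw [dist_eq_norm, Real.norm_eq_abs]
    have hsub : stmt7_F J ρ₀ v - stmt7_F J ρ₀ w
        = ∫ y in {y : E | ρ₀/2 < ‖y‖}, (stmt7_phi ρ₀ v y - stmt7_phi ρ₀ w y) * J y := by
      rw [stmt7_F, stmt7_F, ← integral_sub (stmt7_intPhiJ hρ₀ hJnn hJC1 hint v)
        (stmt7_intPhiJ hρ₀ hJnn hJC1 hint w)]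
      congr 1
      ext y
      ring
    rw [hsub]
    calc |∫ y in {y : E | ρ₀/2 < ‖y‖}, (stmt7_phi ρ₀ v y - stmt7_phi ρ₀ w y) * J y|
        ≤ ∫ y in {y : E | ρ₀/2 < ‖y‖}, |(stmt7_phi ρ₀ v y - stmt7_phi ρ₀ w y) * J y| :=
          by
            have := norm_integral_le_integral_norm
              (μ := volume.restrict {y : E | ρ₀/2 < ‖y‖})
              (fun y => (stmt7_phi ρ₀ v y - stmt7_phi ρ₀ w y) * J y)
            simpa [abs_mul] using this
      _ ≤ ∫ y in {y : E | ρ₀/2 < ‖y‖}, (‖v - w‖ / (ρ₀/16)) * J y := by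
          apply setIntegral_mono_on
          · exact ((stmt7_intPhiJ hρ₀ hJnn hJC1 hint v).sub
              (stmt7_intPhiJ hρ₀ hJnn hJC1 hint w)).abs.congr (by
                filter_upwards with y
                simp [Pi.sub_apply, sub_mul])
          · exact (stmt7_intJ hρ₀ hJnn hJC1 hint).const_mul _
          · exact stmt7_measA ρ₀
          · intro y _
            rw [abs_mul, abs_of_nonneg (hJnn y)]
            exact mul_le_mul_of_nonneg_right (stmt7_phi_lip hρ₀ v w y) (hJnn y)
      _ = (J₀ / (ρ₀/16)) * dist v w := by
          rw [integral_const_mul, dist_eq_norm, ← hJ₀]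
          ring
  have hK : (0:ℝ) ≤ J₀ / (ρ₀/16) := by positivity
  exact (LipschitzWith.of_dist_le_mul (K := ⟨J₀ / (ρ₀/16), hK⟩) (fun v w => key v w)).continuous

lemma stmt7_F_pos {J : E → ℝ} {ρ₀ : ℝ} (hρ₀ : 0 < ρ₀) (hJnn : ∀ y, 0 ≤ J y)
    (hJC1 : ContDiffOn ℝ 1 J {(0 : E)}ᶜ)
    (hJpos : ∀ y ∈ Metric.ball (0 : E) ρ₀ \ {0}, 0 < J y)
    (hint : Integrable (fun y : E => min 1 (‖y‖ ^ 2) * J y))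
    {v : E} (hv : v ∈ Metric.sphere (0:E) (3*ρ₀/4)) :
    0 < stmt7_F J ρ₀ v := by
  have hvn : ‖v‖ = 3*ρ₀/4 := mem_sphere_zero_iff_norm.mp hv
  rw [stmt7_F]
  rw [setIntegral_pos_iff_support_of_nonneg_ae
    (Filter.Eventually.of_forall (fun y => mul_nonneg (stmt7_phi_nonneg ρ₀ v y) (hJnn y)))
    (stmt7_intPhiJ hρ₀ hJnn hJC1 hint v)]
  have hsubset : Metric.ball v (ρ₀/32) ⊆
      Function.support (fun y => stmt7_phi ρ₀ v y * J y) ∩ {y : E | ρ₀/2 < ‖y‖} := by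
    intro y hy
    rw [Metric.mem_ball, dist_eq_norm] at hy
    have h1 : ‖y‖ > ρ₀/2 := by
      have := norm_sub_norm_le y v
      rw [hvn] at this
      linarith [abs_le.mp (abs_norm_sub_norm_le y v)]
    have h2 : ‖y‖ < ρ₀ := by
      have := norm_le_norm_add_norm_sub' y v
      calc ‖y‖ ≤ ‖v‖ + ‖y - v‖ := by
            have := norm_sub_norm_le y v; linarith [norm_sub_rev y v ▸ this,
              abs_le.mp (abs_norm_sub_norm_le y v)]
        _ < 3*ρ₀/4 + ρ₀/32 := by rw [hvn]; linarith
        _ ≤ ρ₀ := by linarith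
    have hy0 : y ≠ 0 := by
      intro h; rw [h, norm_zero] at h1; linarith
    have hJy : 0 < J y := hJpos y ⟨Metric.mem_ball.mpr (by rwa [dist_zero_right]), hy0⟩
    have hphi : (1/2:ℝ) ≤ stmt7_phi ρ₀ v y := stmt7_phi_half hρ₀ hy
    constructor
    · simp only [Function.mem_support]
      positivity
    · exact h1
  calc (0:ℝ≥0∞) < volume (Metric.ball v (ρ₀/32)) :=
        Metric.measure_ball_pos volume v (by positivity)
    _ ≤ volume (Function.support (fun y => stmt7_phi ρ₀ v y * J y) ∩ {y : E | ρ₀/2 < ‖y‖}) :=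
        measure_mono hsubset

lemma stmt7_intPhiExpJ {J : E → ℝ} {ρ₀ : ℝ} (hρ₀ : 0 < ρ₀) (hJnn : ∀ y, 0 ≤ J y)
    (hJC1 : ContDiffOn ℝ 1 J {(0 : E)}ᶜ)
    (hexp : ∀ β > (0:ℝ), IntegrableOn (fun y : E => Real.exp (β * ‖y‖) * J y)
      {y : E | ρ₀ / 2 < ‖y‖}) (p v : E) :
    IntegrableOn (fun y : E => stmt7_phi ρ₀ v y * (Real.exp ⟪p, y⟫ * J y))
      {y : E | ρ₀/2 < ‖y‖} := by
  apply Integrable.mono' (stmt7_intExp hρ₀ hJnn hJC1 hexp p)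
  · exact ((stmt7_phi_cont ρ₀ v).continuousOn.mul
      ((Real.continuous_exp.comp (stmt7_contInner p)).continuousOn.mul
        (stmt7_contJ hρ₀ hJC1))).aestronglyMeasurable (stmt7_measA ρ₀)
  · filter_upwards with y
    have h0 : 0 ≤ Real.exp ⟪p,y⟫ * J y := mul_nonneg (Real.exp_pos _).le (hJnn y)
    rw [Real.norm_eq_abs, abs_of_nonneg (mul_nonneg (stmt7_phi_nonneg ρ₀ v y) h0)]
    nlinarith [stmt7_phi_le_one hρ₀ v y, stmt7_phi_nonneg ρ₀ v y]

lemma stmt7_Hlow {J : E → ℝ} {ρ₀ : ℝ} (hρ₀ : 0 < ρ₀) (hJnn : ∀ y, 0 ≤ J y)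
    (hJC1 : ContDiffOn ℝ 1 J {(0 : E)}ᶜ)
    (hJpos : ∀ y ∈ Metric.ball (0 : E) ρ₀ \ {0}, 0 < J y)
    (hint : Integrable (fun y : E => min 1 (‖y‖ ^ 2) * J y))
    (hexp : ∀ β > (0:ℝ), IntegrableOn (fun y : E => Real.exp (β * ‖y‖) * J y)
      {y : E | ρ₀ / 2 < ‖y‖})
    (hS : (Metric.sphere (0:E) (3*ρ₀/4)).Nonempty) :
    ∃ m > (0:ℝ), ∀ p : E, p ≠ 0 →
      m * Real.exp ((ρ₀/2) * ‖p‖) ≤ ∫ y in {y : E | ρ₀/2 < ‖y‖}, Real.exp ⟪p, y⟫ * J y := by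
  obtain ⟨v₀, hv₀, hmin⟩ := (isCompact_sphere (0:E) (3*ρ₀/4)).exists_isMinOn hS
    (stmt7_F_cont hρ₀ hJnn hJC1 hint).continuousOn
  refine ⟨stmt7_F J ρ₀ v₀, stmt7_F_pos hρ₀ hJnn hJC1 hJpos hint hv₀, fun p hp => ?_⟩
  have hpn : (0:ℝ) < ‖p‖ := norm_pos_iff.mpr hp
  set v : E := ((3*ρ₀/4)/‖p‖) • p with hvdef
  have hvS : v ∈ Metric.sphere (0:E) (3*ρ₀/4) := by
    rw [mem_sphere_zero_iff_norm, hvdef, norm_smul, Real.norm_eq_abs,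
      abs_of_pos (by positivity), div_mul_cancel₀]
    exact ne_of_gt hpn
  have hinner : ∀ y : E, ‖y - v‖ < ρ₀/16 → (ρ₀/2) * ‖p‖ ≤ ⟪p, y⟫ := by
    intro y hy
    have h1 : (⟪p, v⟫ : ℝ) = (3*ρ₀/4) * ‖p‖ := by
      rw [hvdef, real_inner_smul_right, real_inner_self_eq_norm_sq]
      field_simp
    have h2 : (⟪p, y - v⟫ : ℝ) ≥ -(‖p‖ * (ρ₀/16)) := by
      have := abs_real_inner_le_norm p (y - v)
      have h3 : ‖p‖ * ‖y - v‖ ≤ ‖p‖ * (ρ₀/16) := mul_le_mul_of_nonneg_left hy.le (norm_nonneg p)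
      linarith [(abs_le.mp this).1]
    have h4 : (⟪p, y⟫ : ℝ) = ⟪p, v⟫ + ⟪p, y - v⟫ := by
      rw [inner_sub_right]; ring
    rw [h4, h1]
    nlinarith
  calc stmt7_F J ρ₀ v₀ * Real.exp ((ρ₀/2) * ‖p‖)
      ≤ stmt7_F J ρ₀ v * Real.exp ((ρ₀/2) * ‖p‖) :=
        mul_le_mul_of_nonneg_right (hmin hvS) (Real.exp_pos _).le
    _ = ∫ y in {y : E | ρ₀/2 < ‖y‖}, Real.exp ((ρ₀/2) * ‖p‖) * (stmt7_phi ρ₀ v y * J y) := by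
        rw [stmt7_F, integral_const_mul]; ring
    _ ≤ ∫ y in {y : E | ρ₀/2 < ‖y‖}, stmt7_phi ρ₀ v y * (Real.exp ⟪p, y⟫ * J y) := by
        apply setIntegral_mono_on
        · exact (stmt7_intPhiJ hρ₀ hJnn hJC1 hint v).const_mul _
        · exact stmt7_intPhiExpJ hρ₀ hJnn hJC1 hexp p v
        · exact stmt7_measA ρ₀
        · intro y _
          rcases eq_or_lt_of_le (stmt7_phi_nonneg ρ₀ v y) with h | h
          · rw [← h]; simp
          · have hd := stmt7_phi_supp hρ₀ h
            have hee := Real.exp_le_exp.mpr (hinner y hd)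
            have hφJ : 0 ≤ stmt7_phi ρ₀ v y * J y := mul_nonneg h.le (hJnn y)
            calc Real.exp ((ρ₀/2) * ‖p‖) * (stmt7_phi ρ₀ v y * J y)
                ≤ Real.exp ⟪p,y⟫ * (stmt7_phi ρ₀ v y * J y) :=
                  mul_le_mul_of_nonneg_right hee hφJ
              _ = stmt7_phi ρ₀ v y * (Real.exp ⟪p,y⟫ * J y) := by ring
    _ ≤ ∫ y in {y : E | ρ₀/2 < ‖y‖}, Real.exp ⟪p, y⟫ * J y := by
        apply setIntegral_mono_on
        · exact stmt7_intPhiExpJ hρ₀ hJnn hJC1 hexp p v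
        · exact stmt7_intExp hρ₀ hJnn hJC1 hexp p
        · exact stmt7_measA ρ₀
        · intro y _
          have h0 : 0 ≤ Real.exp ⟪p,y⟫ * J y := mul_nonneg (Real.exp_pos _).le (hJnn y)
          nlinarith [stmt7_phi_le_one hρ₀ v y, stmt7_phi_nonneg ρ₀ v y]

lemma stmt7_scalar (s M : ℝ) (hM : 0 < M) :
    M * Real.exp s - (M * Real.exp M + 1) ≤ s * Real.exp s := by
  rcases le_or_gt M s with h | h
  · have h1 : M * Real.exp s ≤ s * Real.exp s :=
      mul_le_mul_of_nonneg_right h (Real.exp_pos s).le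
    nlinarith [Real.exp_pos M]
  · have h1 : M * Real.exp s ≤ M * Real.exp M :=
      mul_le_mul_of_nonneg_left (Real.exp_le_exp.mpr h.le) hM.le
    have h2 : -1 ≤ s * Real.exp s := by
      rcases le_or_gt 0 s with hs | hs
      · nlinarith [Real.exp_pos s]
      · have h3 := Real.add_one_le_exp (-s)
        have h4 : Real.exp s * Real.exp (-s) = 1 := by
          rw [← Real.exp_add]; simp
        nlinarith [Real.exp_pos s, Real.exp_pos (-s)]
    linarith

lemma stmt7_Dlow {J : E → ℝ} {ρ₀ : ℝ} (hρ₀ : 0 < ρ₀) (hJnn : ∀ y, 0 ≤ J y)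
    (hJC1 : ContDiffOn ℝ 1 J {(0 : E)}ᶜ)
    (hint : Integrable (fun y : E => min 1 (‖y‖ ^ 2) * J y))
    (hexp : ∀ β > (0:ℝ), IntegrableOn (fun y : E => Real.exp (β * ‖y‖) * J y)
      {y : E | ρ₀ / 2 < ‖y‖}) (p : E) (M : ℝ) (hM : 0 < M) :
    M * (∫ y in {y : E | ρ₀/2 < ‖y‖}, Real.exp ⟪p, y⟫ * J y)
      - (M * Real.exp M + 1) * (∫ y in {y : E | ρ₀/2 < ‖y‖}, J y)
    ≤ ∫ y in {y : E | ρ₀/2 < ‖y‖}, ⟪p, y⟫ * Real.exp ⟪p, y⟫ * J y := by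
  have key : ∫ y in {y : E | ρ₀/2 < ‖y‖},
      (M * (Real.exp ⟪p, y⟫ * J y) - (M * Real.exp M + 1) * J y)
      ≤ ∫ y in {y : E | ρ₀/2 < ‖y‖}, ⟪p, y⟫ * Real.exp ⟪p, y⟫ * J y := by
    apply setIntegral_mono_on
    · exact ((stmt7_intExp hρ₀ hJnn hJC1 hexp p).const_mul M).sub
        ((stmt7_intJ hρ₀ hJnn hJC1 hint).const_mul _)
    · exact stmt7_intMul hρ₀ hJnn hJC1 hexp p
    · exact stmt7_measA ρ₀
    · intro y _
      have := stmt7_scalar (⟪p, y⟫ : ℝ) M hM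
      nlinarith [hJnn y]
  rw [integral_sub ((stmt7_intExp hρ₀ hJnn hJC1 hexp p).const_mul M)
    ((stmt7_intJ hρ₀ hJnn hJC1 hint).const_mul _), integral_const_mul, integral_const_mul] at key
  exact key

end Aux

/-- `H^ess(p) / (p · DH^ess(p)) → 0` as `‖p‖ → ∞`. -/
theorem stmt_7 {N : ℕ}
    (J : EuclideanSpace ℝ (Fin N) → ℝ) (ρ₀ : ℝ) (hρ₀ : 0 < ρ₀)
    (hJnn : ∀ y, 0 ≤ J y)
    (hJC1 : ContDiffOn ℝ 1 J {(0 : EuclideanSpace ℝ (Fin N))}ᶜ)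
    (hJpos : ∀ y ∈ Metric.ball (0 : EuclideanSpace ℝ (Fin N)) ρ₀ \ {0}, 0 < J y)
    (hsupp : Metric.ball (0 : EuclideanSpace ℝ (Fin N)) ρ₀ ⊆ Function.support J)
    (hint : Integrable (fun y => min 1 (‖y‖ ^ 2) * J y))
    (hexp : ∀ β > (0:ℝ), IntegrableOn (fun y => Real.exp (β * ‖y‖) * J y)
      {y : EuclideanSpace ℝ (Fin N) | ρ₀ / 2 < ‖y‖}) :
    Filter.Tendsto
      (fun p : EuclideanSpace ℝ (Fin N) =>
        (∫ y in {y : EuclideanSpace ℝ (Fin N) | ρ₀ / 2 < ‖y‖},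
          Real.exp ⟪p, y⟫ * J y) /
        (∫ y in {y : EuclideanSpace ℝ (Fin N) | ρ₀ / 2 < ‖y‖},
          ⟪p, y⟫ * Real.exp ⟪p, y⟫ * J y))
      (Bornology.cobounded (EuclideanSpace ℝ (Fin N))) (nhds 0) := by
  set H : EuclideanSpace ℝ (Fin N) → ℝ :=
    fun p => ∫ y in {y : EuclideanSpace ℝ (Fin N) | ρ₀ / 2 < ‖y‖}, Real.exp ⟪p, y⟫ * J y with hH
  set D : EuclideanSpace ℝ (Fin N) → ℝ :=
    fun p => ∫ y in {y : EuclideanSpace ℝ (Fin N) | ρ₀ / 2 < ‖y‖},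
      ⟪p, y⟫ * Real.exp ⟪p, y⟫ * J y with hD
  by_cases hS : (Metric.sphere (0:EuclideanSpace ℝ (Fin N)) (3*ρ₀/4)).Nonempty
  · -- main case
    obtain ⟨m, hm, hHlow⟩ := stmt7_Hlow hρ₀ hJnn hJC1 hJpos hint hexp hS
    set J₀ : ℝ := ∫ y in {y : EuclideanSpace ℝ (Fin N) | ρ₀/2 < ‖y‖}, J y with hJ₀
    have hJ₀nn : 0 ≤ J₀ := setIntegral_nonneg (stmt7_measA ρ₀) (fun y _ => hJnn y)
    -- H tends to infinity
    have hnorm : Tendsto (fun p : EuclideanSpace ℝ (Fin N) => ‖p‖) (Bornology.cobounded (EuclideanSpace ℝ (Fin N))) atTop :=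
      tendsto_norm_cobounded_atTop
    have hlowT : Tendsto (fun p : EuclideanSpace ℝ (Fin N) => m * Real.exp ((ρ₀/2) * ‖p‖))
        (Bornology.cobounded (EuclideanSpace ℝ (Fin N))) atTop := by
      apply Tendsto.const_mul_atTop hm
      exact Real.tendsto_exp_atTop.comp (hnorm.const_mul_atTop (by positivity))
    have hne : ∀ᶠ p : EuclideanSpace ℝ (Fin N) in Bornology.cobounded (EuclideanSpace ℝ (Fin N)), p ≠ 0 := by
      filter_upwards [hnorm.eventually_ge_atTop 1] with p hp
      intro h
      rw [h, norm_zero] at hp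
      linarith
    have hHtop : Tendsto H (Bornology.cobounded (EuclideanSpace ℝ (Fin N))) atTop := by
      apply tendsto_atTop_mono' _ _ hlowT
      filter_upwards [hne] with p hp
      exact hHlow p hp
    rw [Metric.tendsto_nhds]
    intro ε hε
    set M : ℝ := 4/ε with hMdef
    have hM : 0 < M := by positivity
    set C : ℝ := (M * Real.exp M + 1) * J₀ with hC
    have hCnn : 0 ≤ C := by
      apply mul_nonneg _ hJ₀nn
      nlinarith [Real.exp_pos M]
    filter_upwards [hHtop.eventually_ge_atTop (max 1 (2*C/M))] with p hp
    have hH1 : (1:ℝ) ≤ H p := le_trans (le_max_left _ _) hp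
    have hH2 : 2*C/M ≤ H p := le_trans (le_max_right _ _) hp
    have hCle : C ≤ M * H p / 2 := by
      rw [div_le_iff₀ hM] at hH2
      linarith
    have hDlow := stmt7_Dlow hρ₀ hJnn hJC1 hint hexp p M hM
    have hDge : M * H p / 2 ≤ D p := by
      have : M * H p - C ≤ D p := hDlow
      linarith
    have hDpos : 0 < D p := lt_of_lt_of_le (by nlinarith) hDge
    have hfrac : H p / D p ≤ 2 / M := by
      rw [div_le_div_iff₀ hDpos hM]
      nlinarith
    rw [Real.dist_eq, sub_zero, abs_of_nonneg (div_nonneg (by linarith) hDpos.le)]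
    calc H p / D p ≤ 2 / M := hfrac
      _ = ε/2 := by rw [hMdef]; field_simp; ring
      _ < ε := by linarith
  · -- degenerate case: the sphere is empty, so the space is trivial
    have hempty : {p : EuclideanSpace ℝ (Fin N) | 1 ≤ ‖p‖} = ∅ := by
      ext p
      simp only [mem_setOf_eq, mem_empty_iff_false, iff_false, not_le]
      by_contra hc
      push_neg at hc
      have hpn : (0:ℝ) < ‖p‖ := by linarith
      apply hS
      refine ⟨((3*ρ₀/4)/‖p‖) • p, ?_⟩
      rw [mem_sphere_zero_iff_norm, norm_smul, Real.norm_eq_abs,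
        abs_of_pos (by positivity), div_mul_cancel₀]
      exact ne_of_gt hpn
    have h1 : {p : EuclideanSpace ℝ (Fin N) | 1 ≤ ‖p‖} ∈ Bornology.cobounded (EuclideanSpace ℝ (Fin N)) :=
      tendsto_norm_cobounded_atTop.eventually (eventually_ge_atTop 1)
    rw [hempty] at h1
    rw [Filter.empty_mem_iff_bot.mp h1]
    exact tendsto_bot
end

section
/- Under the angle condition liminf_{|y|→∞} (y · Dω(y))/(|y||Dω(y)|) ≥ η for some η ∈ (0,1], the maximizer y₀(p) of p·y − |y|ω(y) satisfies liminf_{|p|→∞} (p · y₀(p))/(|p||y₀(p)|) ≥ η. -/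
/-!
A maximizer `y₀(p)` escapes to infinity with `p`: testing it against the point `r p / ‖p‖` gives
`‖p‖ ‖y₀(p)‖ ≥ r ‖p‖ - O(1)`. Away from `0` the first-order condition reads
`p = (ω(y₀)/‖y₀‖) y₀ + ‖y₀‖ ∇ω(y₀)`, and `ω(y₀) ≥ 0` once `p` is large, so `p` is a nonnegative
combination of `y₀` and `∇ω(y₀)`. Such a combination is at least as close in angle to `y₀` as
`∇ω(y₀)` is, provided that angle is acute; hence the cosine of the angle between `p` and `y₀(p)`
dominates the one between `y₀(p)` and `∇ω(y₀(p))`, whose liminf is at least `η`.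
-/

open Real Set Filter
open scoped RealInnerProductSpace

section

variable {α E : Type*} [NormedAddCommGroup E] [InnerProductSpace ℝ E]

theorem isBoundedUnder_ge_real_inner_div_norm_mul_norm (l : Filter α) (u v : α → E) :
    l.IsBoundedUnder (· ≥ ·) fun x => ⟪u x, v x⟫ / (‖u x‖ * ‖v x‖) :=
  isBoundedUnder_of ⟨-1, fun _ => (abs_le.1 (abs_real_inner_div_norm_mul_norm_le_one _ _)).1⟩

theorem isCoboundedUnder_ge_real_inner_div_norm_mul_norm (l : Filter α) [l.NeBot]
    (u v : α → E) : l.IsCoboundedUnder (· ≥ ·) fun x => ⟪u x, v x⟫ / (‖u x‖ * ‖v x‖) :=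
  (isBoundedUnder_of ⟨1, fun _ =>
    (abs_le.1 (abs_real_inner_div_norm_mul_norm_le_one _ _)).2⟩).isCoboundedUnder_ge

theorem real_inner_div_norm_mul_norm_le_of_eq_smul_add_smul {p q g : E} {c d : ℝ}
    (hc : 0 ≤ c) (hd : 0 ≤ d) (hpqg : p = c • q + d • g) (hp : p ≠ 0) (hq : q ≠ 0)
    (hqg : 0 ≤ ⟪q, g⟫ / (‖q‖ * ‖g‖)) :
    ⟪q, g⟫ / (‖q‖ * ‖g‖) ≤ ⟪p, q⟫ / (‖p‖ * ‖q‖) := by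
  set a := ⟪q, g⟫ / (‖q‖ * ‖g‖)
  have ha1 : a ≤ 1 := (abs_le.1 (abs_real_inner_div_norm_mul_norm_le_one q g)).2
  have ha : a * (‖q‖ * ‖g‖) = ⟪q, g⟫ := div_mul_cancel_of_imp fun h => by
    rcases mul_eq_zero.1 h with h | h <;> simp [norm_eq_zero.1 h]
  have hnorm : ‖p‖ ≤ c * ‖q‖ + d * ‖g‖ := by
    rw [hpqg]
    refine (norm_add_le _ _).trans_eq ?_
    rw [norm_smul, norm_smul, Real.norm_of_nonneg hc, Real.norm_of_nonneg hd]
  have hinner : ⟪p, q⟫ = c * ‖q‖ ^ 2 + d * ⟪q, g⟫ := by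
    rw [hpqg, inner_add_left, real_inner_smul_left, real_inner_smul_left, real_inner_self_eq_norm_sq,
      real_inner_comm]
  rw [le_div_iff₀ (by positivity)]
  calc a * (‖p‖ * ‖q‖) ≤ a * ((c * ‖q‖ + d * ‖g‖) * ‖q‖) := by gcongr
    _ = a * c * ‖q‖ ^ 2 + d * (a * (‖q‖ * ‖g‖)) := by ring
    _ ≤ c * ‖q‖ ^ 2 + d * ⟪q, g⟫ := by rw [ha]; gcongr; nlinarith
    _ = ⟪p, q⟫ := hinner.symm

theorem tendsto_cobounded_of_isMaxOn_inner_sub [ProperSpace E] {f : E → ℝ} (hf : Continuous f)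
    (hbdd : BddBelow (range f)) {y₀ : E → E}
    (hy₀ : ∀ p, IsMaxOn (fun y => ⟪p, y⟫ - f y) univ (y₀ p)) :
    Tendsto y₀ (Bornology.cobounded E) (Bornology.cobounded E) := by
  obtain ⟨m, hm⟩ := hbdd
  rw [← tendsto_norm_atTop_iff_cobounded, tendsto_atTop]
  intro R
  set r := |R| + 1
  obtain ⟨C, hC⟩ := (isCompact_sphere (0 : E) r).exists_bound_of_continuousOn hf.continuousOn
  filter_upwards [eventually_cobounded_le_norm (max 1 (C - m))] with p hp
  have hp0 : 0 < ‖p‖ := one_pos.trans_le ((le_max_left _ _).trans hp)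
  set y := (r / ‖p‖) • p
  have hy : y ∈ Metric.sphere (0 : E) r := by
    simp [y, norm_smul, abs_of_pos (by positivity : 0 < r), hp0.ne']
  have hpy : ⟪p, y⟫ = r * ‖p‖ := by
    simp [y, real_inner_smul_right]
    field_simp
  have hmax : ⟪p, y⟫ - f y ≤ ⟪p, y₀ p⟫ - f (y₀ p) := hy₀ p (mem_univ y)
  have hfy : f y ≤ C := (le_abs_self _).trans (hC y hy)
  have hfy₀ : m ≤ f (y₀ p) := hm (mem_range_self _)
  have hCS : ⟪p, y₀ p⟫ ≤ ‖p‖ * ‖y₀ p‖ := real_inner_le_norm _ _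
  have : ‖p‖ * (r - 1) ≤ ‖p‖ * ‖y₀ p‖ := by nlinarith [le_max_right 1 (C - m)]
  linarith [le_of_mul_le_mul_left this hp0, le_abs_self R]

end

section

variable {E : Type*} [NormedAddCommGroup E] [InnerProductSpace ℝ E] [CompleteSpace E]

theorem hasGradientAt_norm {q : E} (hq : q ≠ 0) : HasGradientAt (‖·‖) (‖q‖⁻¹ • q) q := by
  have hq' : 0 < ‖q‖ := norm_pos_iff.mpr hq
  have h := (hasStrictFDerivAt_norm_sq q).hasFDerivAt.sqrt (by positivity)
  simp only [sqrt_sq (norm_nonneg _)] at h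
  rw [hasGradientAt_iff_hasFDerivAt]
  refine h.congr_fderiv (ContinuousLinearMap.ext fun w => ?_)
  simp [InnerProductSpace.toDual_apply_apply]
  field_simp

theorem eq_smul_add_smul_gradient_of_isLocalMax {ω : E → ℝ} {p q : E} (hq : q ≠ 0)
    (hω : DifferentiableAt ℝ ω q) (hmax : IsLocalMax (fun y => ⟪p, y⟫ - ‖y‖ * ω y) q) :
    p = (ω q / ‖q‖) • q + ‖q‖ • gradient ω q := by
  have hφ : HasGradientAt (fun y => ⟪p, y⟫ - ‖y‖ * ω y)
      (p - ((ω q / ‖q‖) • q + ‖q‖ • gradient ω q)) q := by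
    rw [hasGradientAt_iff_hasFDerivAt]
    refine ((innerSL ℝ p).hasFDerivAt.sub
      ((hasGradientAt_norm hq).hasFDerivAt.mul hω.hasFDerivAt)).congr_fderiv
      (ContinuousLinearMap.ext fun w => ?_)
    simp [InnerProductSpace.toDual_apply_apply, gradient]
    ring
  rw [← sub_eq_zero, ← (InnerProductSpace.toDual ℝ E).map_eq_zero_iff]
  exact hmax.hasFDerivAt_eq_zero hφ.hasFDerivAt

theorem real_inner_div_norm_mul_norm_gradient_le_of_isLocalMax {ω : E → ℝ} {p q : E}
    (hp : p ≠ 0) (hq : q ≠ 0) (hω : DifferentiableAt ℝ ω q) (hωq : 0 ≤ ω q)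
    (hmax : IsLocalMax (fun y => ⟪p, y⟫ - ‖y‖ * ω y) q)
    (hacute : 0 ≤ ⟪q, gradient ω q⟫ / (‖q‖ * ‖gradient ω q‖)) :
    ⟪q, gradient ω q⟫ / (‖q‖ * ‖gradient ω q‖) ≤ ⟪p, q⟫ / (‖p‖ * ‖q‖) :=
  real_inner_div_norm_mul_norm_le_of_eq_smul_add_smul (by positivity) (norm_nonneg _)
    (eq_smul_add_smul_gradient_of_isLocalMax hq hω hmax) hp hq hacute

end

theorem stmt_16_general {N : ℕ}
    (ω : EuclideanSpace ℝ (Fin N) → ℝ)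
    (hωC1 : ContDiffOn ℝ 1 ω {(0 : EuclideanSpace ℝ (Fin N))}ᶜ)
    (hconv : ConvexOn ℝ Set.univ (fun y => ‖y‖ * ω y))
    (hsuper : Filter.Tendsto (fun y => ‖y‖ * ω y / ‖y‖)
      (Bornology.cobounded (EuclideanSpace ℝ (Fin N))) Filter.atTop)
    (η : ℝ) (hη : 0 < η)
    (hangle : η ≤ Filter.liminf
      (fun y : EuclideanSpace ℝ (Fin N) =>
        ⟪y, gradient ω y⟫ / (‖y‖ * ‖gradient ω y‖))
      (Bornology.cobounded (EuclideanSpace ℝ (Fin N))))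
    (y₀ : EuclideanSpace ℝ (Fin N) → EuclideanSpace ℝ (Fin N))
    (hy₀ : ∀ p, IsMaxOn (fun y => ⟪p, y⟫ - ‖y‖ * ω y) Set.univ (y₀ p)) :
    η ≤ Filter.liminf
      (fun p : EuclideanSpace ℝ (Fin N) => ⟪p, y₀ p⟫ / (‖p‖ * ‖y₀ p‖))
      (Bornology.cobounded (EuclideanSpace ℝ (Fin N))) := by
  set l := Bornology.cobounded (EuclideanSpace ℝ (Fin N))
  rcases l.eq_or_neBot with hbot | hl
  -- `N = 0`: every liminf along `⊥` is the junk value `sSup univ = 0`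
  · simpa [hbot, liminf_eq] using hangle
  have hf : Continuous fun y => ‖y‖ * ω y := continuousOn_univ.1 (hconv.continuousOn isOpen_univ)
  have hω : Tendsto ω l atTop := hsuper.congr' <| by
    filter_upwards [Bornology.eventually_ne_cobounded 0] with y hy
    field_simp [norm_ne_zero_iff.2 hy]
  obtain ⟨x, hx⟩ := hf.exists_forall_le <| by
    rw [← Metric.cobounded_eq_cocompact]
    exact tendsto_norm_cobounded_atTop.atTop_mul_atTop₀ hω
  have hy₀l : Tendsto y₀ l l :=
    tendsto_cobounded_of_isMaxOn_inner_sub hf ⟨_, forall_mem_range.2 hx⟩ hy₀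
  have hangle_pos : ∀ᶠ y in l, 0 < ⟪y, gradient ω y⟫ / (‖y‖ * ‖gradient ω y‖) :=
    eventually_lt_of_lt_liminf (hη.trans_le hangle)
      (isBoundedUnder_ge_real_inner_div_norm_mul_norm l id _)
  have hcompare : ∀ᶠ p in l, ⟪y₀ p, gradient ω (y₀ p)⟫ / (‖y₀ p‖ * ‖gradient ω (y₀ p)‖) ≤
      ⟪p, y₀ p⟫ / (‖p‖ * ‖y₀ p‖) := by
    filter_upwards [hy₀l.eventually hangle_pos, hy₀l.eventually (hω.eventually_ge_atTop 0),
      hy₀l.eventually (Bornology.eventually_ne_cobounded 0), Bornology.eventually_ne_cobounded 0]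
      with p hpos hω₀ hq hp
    exact real_inner_div_norm_mul_norm_gradient_le_of_isLocalMax hp hq
      ((hωC1.differentiableOn one_ne_zero).differentiableAt (isOpen_compl_singleton.mem_nhds hq))
      hω₀ ((hy₀ p).isLocalMax univ_mem) hpos.le
  calc η ≤ liminf (fun y => ⟪y, gradient ω y⟫ / (‖y‖ * ‖gradient ω y‖)) l := hangle
    _ ≤ liminf ((fun y => ⟪y, gradient ω y⟫ / (‖y‖ * ‖gradient ω y‖)) ∘ y₀) l :=
      hy₀l.liminf_le_liminf_comp (isCoboundedUnder_ge_real_inner_div_norm_mul_norm _ id _)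
        (isBoundedUnder_ge_real_inner_div_norm_mul_norm l id _)
    _ ≤ liminf (fun p => ⟪p, y₀ p⟫ / (‖p‖ * ‖y₀ p‖)) l :=
      liminf_le_liminf hcompare (isBoundedUnder_ge_real_inner_div_norm_mul_norm l y₀ _)
        (isCoboundedUnder_ge_real_inner_div_norm_mul_norm l id y₀)

/-- under the angle condition
`liminf_{‖y‖→∞} (y·Dω(y))/(‖y‖‖Dω(y)‖) ≥ η`, any maximizer selection `y₀(p)` of
`p·y − ‖y‖ω(y)` satisfies `liminf_{‖p‖→∞} (p·y₀(p))/(‖p‖‖y₀(p)‖) ≥ η`. -/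
theorem stmt_16 {N : ℕ}
    (ω : EuclideanSpace ℝ (Fin N) → ℝ)
    (hωC1 : ContDiffOn ℝ 1 ω {(0 : EuclideanSpace ℝ (Fin N))}ᶜ)
    (hconv : ConvexOn ℝ Set.univ (fun y => ‖y‖ * ω y))
    (hsuper : Filter.Tendsto (fun y => ‖y‖ * ω y / ‖y‖)
      (Bornology.cobounded (EuclideanSpace ℝ (Fin N))) Filter.atTop)
    (η : ℝ) (hη : 0 < η) (hη1 : η ≤ 1)
    (hangle : η ≤ Filter.liminf
      (fun y : EuclideanSpace ℝ (Fin N) =>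
        ⟪y, gradient ω y⟫ / (‖y‖ * ‖gradient ω y‖))
      (Bornology.cobounded (EuclideanSpace ℝ (Fin N))))
    (y₀ : EuclideanSpace ℝ (Fin N) → EuclideanSpace ℝ (Fin N))
    (hy₀ : ∀ p, IsMaxOn (fun y => ⟪p, y⟫ - ‖y‖ * ω y) Set.univ (y₀ p)) :
    η ≤ Filter.liminf
      (fun p : EuclideanSpace ℝ (Fin N) => ⟪p, y₀ p⟫ / (‖p‖ * ‖y₀ p‖))
      (Bornology.cobounded (EuclideanSpace ℝ (Fin N))) :=
  stmt_16_general ω hωC1 hconv hsuper η hη hangle y₀ hy₀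
end

section
/- Consider the critical case: J symmetric with J(y) = e^{−|y|ω(y)}, ω(y) → 1 as |y| → ∞, so that H(p) = ∫(e^{p·y}−1−(p·y)1_{|y|<1}) J(y) dy is finite exactly for |p| < 1 and H(p) → +∞ as |p| → 1. Then the Lagrangian L(q) = sup_{|p|<1} { p·q − H(p) } satisfies |DL(q)| < 1 for every q, L(q) ≤ |q| for all q, and L(q)/|q| → 1 as |q| → ∞. -/
open MeasureTheory Real Set Filter
open scoped RealInnerProductSpace

set_option maxHeartbeats 4000000 in
/-- critical case. `H` is finite exactly on the open unit ball and blows up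
at the boundary; the Lagrangian `L(q) = sup_{‖p‖<1}{p·q − H(p)}` satisfies `L(q) ≤ ‖q‖`,
`‖DL(q)‖ < 1` for every `q`, and `L(q)/‖q‖ → 1` as `‖q‖ → ∞`. -/
theorem stmt_17 {N : ℕ}
    (J : EuclideanSpace ℝ (Fin N) → ℝ) (ρ₀ : ℝ) (hρ₀ : 0 < ρ₀)
    (hJnn : ∀ y, 0 ≤ J y)
    (hJsym : ∀ y, J (-y) = J y)
    (hJcont : ContinuousOn J {(0 : EuclideanSpace ℝ (Fin N))}ᶜ)
    (hJpos : ∀ y ∈ Metric.ball (0 : EuclideanSpace ℝ (Fin N)) ρ₀ \ {0}, 0 < J y)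
    (hint : Integrable (fun y => min 1 (‖y‖ ^ 2) * J y))
    (hβlt : ∀ β : ℝ, 0 < β → β < 1 →
      IntegrableOn (fun y => Real.exp (β * ‖y‖) * J y)
        {y : EuclideanSpace ℝ (Fin N) | ρ₀ / 2 < ‖y‖})
    (hβgt : ∀ β : ℝ, 1 < β →
      ¬ IntegrableOn (fun y => Real.exp (β * ‖y‖) * J y)
        {y : EuclideanSpace ℝ (Fin N) | ρ₀ / 2 < ‖y‖})
    (H : EuclideanSpace ℝ (Fin N) → ℝ)
    (hHint : ∀ p : EuclideanSpace ℝ (Fin N), ‖p‖ < 1 →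
      Integrable (fun y => (Real.exp ⟪p, y⟫ - 1 -
        Set.indicator {y : EuclideanSpace ℝ (Fin N) | ‖y‖ < 1} (fun y => ⟪p, y⟫) y) * J y))
    (hHnotint : ∀ p : EuclideanSpace ℝ (Fin N), 1 < ‖p‖ →
      ¬ Integrable (fun y => (Real.exp ⟪p, y⟫ - 1 -
        Set.indicator {y : EuclideanSpace ℝ (Fin N) | ‖y‖ < 1} (fun y => ⟪p, y⟫) y) * J y))
    (hH : ∀ p : EuclideanSpace ℝ (Fin N), ‖p‖ < 1 →
      H p = ∫ y, (Real.exp ⟪p, y⟫ - 1 -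
        Set.indicator {y : EuclideanSpace ℝ (Fin N) | ‖y‖ < 1} (fun y => ⟪p, y⟫) y) * J y)
    (hHblow : ∀ C : ℝ, ∃ δ > (0:ℝ), ∀ p : EuclideanSpace ℝ (Fin N),
      1 - δ < ‖p‖ → ‖p‖ < 1 → C ≤ H p)
    (L : EuclideanSpace ℝ (Fin N) → ℝ)
    (hL : ∀ q, IsLUB ((fun p => ⟪p, q⟫ - H p) ''
      Metric.ball (0 : EuclideanSpace ℝ (Fin N)) 1) (L q)) :
    (∀ q, L q ≤ ‖q‖) ∧
    Differentiable ℝ L ∧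
    (∀ q, ‖gradient L q‖ < 1) ∧
    Filter.Tendsto (fun q => L q / ‖q‖)
      (Bornology.cobounded (EuclideanSpace ℝ (Fin N))) (nhds 1) := by
  set Φ : EuclideanSpace ℝ (Fin N) → EuclideanSpace ℝ (Fin N) → ℝ :=
    fun p y => Real.exp ⟪p, y⟫ - 1 -
      Set.indicator {y : EuclideanSpace ℝ (Fin N) | ‖y‖ < 1} (fun y => ⟪p, y⟫) y with hΦdef
  have hHint' : ∀ p : EuclideanSpace ℝ (Fin N), ‖p‖ < 1 →
      Integrable (fun y => Φ p y * J y) := hHint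
  have hH' : ∀ p : EuclideanSpace ℝ (Fin N), ‖p‖ < 1 → H p = ∫ y, Φ p y * J y := hH
  -- upper/lower bound helpers for the supremum
  have hub : ∀ q p : EuclideanSpace ℝ (Fin N), ‖p‖ < 1 → ⟪p, q⟫ - H p ≤ L q := by
    intro q p hp
    exact (hL q).1 ⟨p, mem_ball_zero_iff.2 hp, rfl⟩
  have hlub : ∀ (q : EuclideanSpace ℝ (Fin N)) (c : ℝ),
      (∀ p : EuclideanSpace ℝ (Fin N), ‖p‖ < 1 → ⟪p, q⟫ - H p ≤ c) → L q ≤ c := by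
    intro q c hc
    refine (hL q).2 ?_
    rintro _ ⟨p, hp, rfl⟩
    exact hc p (mem_ball_zero_iff.1 hp)
  -- H 0 = 0
  have hΦ0 : ∀ y, Φ 0 y = 0 := by
    intro y
    simp [hΦdef, Set.indicator_apply]
  have hH0 : H 0 = 0 := by
    rw [hH' 0 (by simp)]
    simp [hΦ0]
  -- H ≥ 0 by symmetry
  have hHnonneg : ∀ p : EuclideanSpace ℝ (Fin N), ‖p‖ < 1 → 0 ≤ H p := by
    intro p hp
    have hint1 : Integrable (fun y => Φ p y * J y) := hHint' p hp
    have hint2 : Integrable (fun y => Φ p (-y) * J y) := by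
      refine hint1.comp_neg.congr (ae_of_all _ fun y => ?_)
      show Φ p (-y) * J (-y) = Φ p (-y) * J y
      rw [hJsym]
    have key : ∫ y, Φ p (-y) * J y = ∫ y, Φ p y * J y := by
      have h := integral_neg_eq_self (fun y => Φ p y * J y) volume
      simpa [hJsym] using h
    have hΦsym : ∀ y, 0 ≤ Φ p y + Φ p (-y) := by
      intro y
      have h1 := Real.add_one_le_exp ⟪p, y⟫
      have h2 := Real.add_one_le_exp (-⟪p, y⟫)
      have hin : ⟪p, -y⟫ = -⟪p, y⟫ := inner_neg_right p y
      by_cases hy : y ∈ {y : EuclideanSpace ℝ (Fin N) | ‖y‖ < 1}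
      · have hy' : -y ∈ {y : EuclideanSpace ℝ (Fin N) | ‖y‖ < 1} := by
          simpa [mem_setOf_eq] using hy
        simp only [hΦdef, Set.indicator_of_mem hy, Set.indicator_of_mem hy', hin]
        linarith
      · have hy' : -y ∉ {y : EuclideanSpace ℝ (Fin N) | ‖y‖ < 1} := by
          simpa [mem_setOf_eq] using hy
        simp only [hΦdef, Set.indicator_of_notMem hy, Set.indicator_of_notMem hy', hin]
        linarith
    have hpos : 0 ≤ ∫ y, (Φ p y * J y + Φ p (-y) * J y) := by
      refine integral_nonneg fun y => ?_
      have h1 := mul_nonneg (hΦsym y) (hJnn y)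
      have h2 : (Φ p y + Φ p (-y)) * J y = Φ p y * J y + Φ p (-y) * J y := by ring
      show (0:ℝ) ≤ Φ p y * J y + Φ p (-y) * J y
      linarith
    rw [integral_add hint1 hint2, key] at hpos
    rw [hH' p hp]
    linarith
  -- convexity of Φ in p
  have hΦconv : ∀ (a b : ℝ) (p₁ p₂ y : EuclideanSpace ℝ (Fin N)), 0 ≤ a → 0 ≤ b → a + b = 1 →
      Φ (a • p₁ + b • p₂) y ≤ a * Φ p₁ y + b * Φ p₂ y := by
    intro a b p₁ p₂ y ha hb hab
    have hi : ⟪a • p₁ + b • p₂, y⟫ = a * ⟪p₁, y⟫ + b * ⟪p₂, y⟫ := by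
      rw [inner_add_left, real_inner_smul_left, real_inner_smul_left]
    have hexp := convexOn_exp.2 (mem_univ ⟪p₁, y⟫) (mem_univ ⟪p₂, y⟫) ha hb hab
    simp only [smul_eq_mul] at hexp
    by_cases hy : y ∈ {y : EuclideanSpace ℝ (Fin N) | ‖y‖ < 1}
    · simp only [hΦdef, Set.indicator_of_mem hy, hi]
      nlinarith
    · simp only [hΦdef, Set.indicator_of_notMem hy, hi]
      nlinarith
  -- strict midpoint convexity of Φ where the inner products differ
  have hΦmid : ∀ (p₁ p₂ y : EuclideanSpace ℝ (Fin N)), ⟪p₁ - p₂, y⟫ ≠ 0 →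
      Φ ((2⁻¹ : ℝ) • (p₁ + p₂)) y < (Φ p₁ y + Φ p₂ y) / 2 := by
    intro p₁ p₂ y hne
    have ht : ⟪p₁, y⟫ ≠ ⟪p₂, y⟫ := by
      intro h
      apply hne
      rw [inner_sub_left, h, sub_self]
    have hexp := strictConvexOn_exp.2 (mem_univ ⟪p₁, y⟫) (mem_univ ⟪p₂, y⟫) ht
      (by norm_num : (0:ℝ) < 2⁻¹) (by norm_num : (0:ℝ) < 2⁻¹) (by norm_num)
    simp only [smul_eq_mul] at hexp
    have hi : ⟪(2⁻¹ : ℝ) • (p₁ + p₂), y⟫ = 2⁻¹ * ⟪p₁, y⟫ + 2⁻¹ * ⟪p₂, y⟫ := by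
      rw [real_inner_smul_left, inner_add_left]; ring
    by_cases hy : y ∈ {y : EuclideanSpace ℝ (Fin N) | ‖y‖ < 1}
    · simp only [hΦdef, Set.indicator_of_mem hy, hi]
      nlinarith
    · simp only [hΦdef, Set.indicator_of_notMem hy, hi]
      nlinarith
  -- convexity of H on the ball
  have hHconvex : ConvexOn ℝ (Metric.ball (0 : EuclideanSpace ℝ (Fin N)) 1) H := by
    refine ⟨convex_ball 0 1, ?_⟩
    intro x hx y hy a b ha hb hab
    have hx1 : ‖x‖ < 1 := mem_ball_zero_iff.1 hx
    have hy1 : ‖y‖ < 1 := mem_ball_zero_iff.1 hy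
    have hxy : ‖a • x + b • y‖ < 1 :=
      mem_ball_zero_iff.1 (convex_ball (0 : EuclideanSpace ℝ (Fin N)) 1 hx hy ha hb hab)
    rw [hH' x hx1, hH' y hy1, hH' _ hxy]
    simp only [smul_eq_mul]
    rw [← integral_const_mul, ← integral_const_mul,
      ← integral_add ((hHint' x hx1).const_mul a) ((hHint' y hy1).const_mul b)]
    refine integral_mono (hHint' _ hxy)
      (((hHint' x hx1).const_mul a).add ((hHint' y hy1).const_mul b)) fun z => ?_
    have h := hΦconv a b x y z ha hb hab
    nlinarith [mul_le_mul_of_nonneg_right h (hJnn z)]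
  have hHcont : ContinuousOn H (Metric.ball (0 : EuclideanSpace ℝ (Fin N)) 1) :=
    ConvexOn.continuousOn Metric.isOpen_ball hHconvex
  -- strict midpoint convexity of H
  have hHmid : ∀ p₁ p₂ : EuclideanSpace ℝ (Fin N), ‖p₁‖ < 1 → ‖p₂‖ < 1 → p₁ ≠ p₂ →
      H ((2⁻¹ : ℝ) • (p₁ + p₂)) < (H p₁ + H p₂) / 2 := by
    intro p₁ p₂ h₁ h₂ hne
    have hm1 : ‖(2⁻¹ : ℝ) • (p₁ + p₂)‖ < 1 := by
      rw [norm_smul, Real.norm_eq_abs]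
      have := norm_add_le p₁ p₂
      rw [abs_of_pos (by norm_num : (0:ℝ) < 2⁻¹)]
      linarith
    set m : EuclideanSpace ℝ (Fin N) := (2⁻¹ : ℝ) • (p₁ + p₂) with hm
    have I₁ := hHint' p₁ h₁
    have I₂ := hHint' p₂ h₂
    have Im := hHint' m hm1
    set D : EuclideanSpace ℝ (Fin N) → ℝ :=
      fun y => ((Φ p₁ y + Φ p₂ y) / 2 - Φ m y) * J y with hD
    have hDint : Integrable D := by
      refine (((I₁.add I₂).div_const 2).sub Im).congr (ae_of_all _ fun y => ?_)
      simp only [hD, Pi.sub_apply, Pi.add_apply]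
      ring
    have hDnn : ∀ y, 0 ≤ D y := by
      intro y
      refine mul_nonneg ?_ (hJnn y)
      have h := hΦconv 2⁻¹ 2⁻¹ p₁ p₂ y (by norm_num) (by norm_num) (by norm_num)
      rw [← smul_add, ← hm] at h
      linarith
    have hDpos : ∀ y, ⟪p₁ - p₂, y⟫ ≠ 0 → y ∈ Metric.ball (0 : EuclideanSpace ℝ (Fin N)) ρ₀ →
        0 < D y := by
      intro y hyne hyb
      have hy0 : y ≠ 0 := by
        intro h
        apply hyne
        rw [h, inner_zero_right]
      have hJ := hJpos y ⟨hyb, hy0⟩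
      have h := hΦmid p₁ p₂ y hyne
      rw [← hm] at h
      exact mul_pos (by linarith) hJ
    have hIpos : 0 < ∫ y, D y := by
      rw [integral_pos_iff_support_of_nonneg_ae (ae_of_all _ hDnn) hDint]
      have hUopen : IsOpen ({y : EuclideanSpace ℝ (Fin N) | ⟪p₁ - p₂, y⟫ ≠ 0} ∩
          Metric.ball 0 ρ₀) := by
        refine IsOpen.inter ?_ Metric.isOpen_ball
        have : Continuous fun y : EuclideanSpace ℝ (Fin N) => ⟪p₁ - p₂, y⟫ :=
          continuous_const.inner continuous_id
        exact (isOpen_compl_singleton (x := (0:ℝ))).preimage this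
      have hUne : ({y : EuclideanSpace ℝ (Fin N) | ⟪p₁ - p₂, y⟫ ≠ 0} ∩
          Metric.ball 0 ρ₀).Nonempty := by
        have hv : p₁ - p₂ ≠ 0 := sub_ne_zero.2 hne
        have hvn : (0:ℝ) < ‖p₁ - p₂‖ := norm_pos_iff.2 hv
        refine ⟨(ρ₀ / 2 / ‖p₁ - p₂‖) • (p₁ - p₂), ?_, ?_⟩
        · have : ⟪p₁ - p₂, (ρ₀ / 2 / ‖p₁ - p₂‖) • (p₁ - p₂)⟫ =
              (ρ₀ / 2 / ‖p₁ - p₂‖) * ‖p₁ - p₂‖ ^ 2 := by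
            rw [real_inner_smul_right, real_inner_self_eq_norm_sq]
          simp only [mem_setOf_eq, this]
          positivity
        · rw [mem_ball_zero_iff, norm_smul, Real.norm_eq_abs,
            abs_of_pos (by positivity), div_mul_cancel₀ _ (ne_of_gt hvn)]
          linarith
      have hsub : ({y : EuclideanSpace ℝ (Fin N) | ⟪p₁ - p₂, y⟫ ≠ 0} ∩
          Metric.ball 0 ρ₀) ⊆ Function.support D := by
        rintro y ⟨hy1, hy2⟩
        exact ne_of_gt (hDpos y hy1 hy2)
      exact lt_of_lt_of_le (hUopen.measure_pos volume hUne) (measure_mono hsub)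
    have hf : Integrable (fun y => (Φ p₁ y * J y + Φ p₂ y * J y) / 2) :=
      (I₁.add I₂).div_const 2
    have hDeq : D = fun y => (Φ p₁ y * J y + Φ p₂ y * J y) / 2 - Φ m y * J y :=
      funext fun y => by simp only [hD]; ring
    have hsum : (H p₁ + H p₂) / 2 - H m = ∫ y, D y := by
      rw [hH' p₁ h₁, hH' p₂ h₂, hH' m hm1, hDeq, integral_sub hf Im, integral_div,
        integral_add I₁ I₂]
    linarith [hIpos, hsum]
  -- continuity of the objective
  have hgc : ∀ q : EuclideanSpace ℝ (Fin N),
      ContinuousOn (fun p : EuclideanSpace ℝ (Fin N) => ⟪p, q⟫ - H p)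
        (Metric.ball (0 : EuclideanSpace ℝ (Fin N)) 1) := by
    intro q
    exact ((continuous_id.inner continuous_const).continuousOn).sub hHcont
  -- existence of a maximizer
  have hex : ∀ q : EuclideanSpace ℝ (Fin N), ∃ p, ‖p‖ < 1 ∧ ⟪p, q⟫ - H p = L q := by
    intro q
    obtain ⟨δ, hδpos, hδ⟩ := hHblow (‖q‖ + 1)
    set r : ℝ := max (1 - δ) 0 with hr
    have hr0 : 0 ≤ r := le_max_right _ _
    have hr1 : r < 1 := max_lt (by linarith) one_pos
    have hKsub : Metric.closedBall (0 : EuclideanSpace ℝ (Fin N)) r ⊆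
        Metric.ball (0 : EuclideanSpace ℝ (Fin N)) 1 := Metric.closedBall_subset_ball hr1
    obtain ⟨p₀, hp₀K, hp₀max⟩ :=
      (isCompact_closedBall (0 : EuclideanSpace ℝ (Fin N)) r).exists_isMaxOn
        ⟨0, Metric.mem_closedBall_self hr0⟩ ((hgc q).mono hKsub)
    have hp₀1 : ‖p₀‖ < 1 := mem_ball_zero_iff.1 (hKsub hp₀K)
    refine ⟨p₀, hp₀1, ?_⟩
    have hg0 : (0 : ℝ) ≤ ⟪p₀, q⟫ - H p₀ := by
      have h := hp₀max (Metric.mem_closedBall_self hr0)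
      simpa [hH0] using h
    refine le_antisymm (hub q p₀ hp₀1) (hlub q _ ?_)
    intro p hp
    by_cases hpr : ‖p‖ ≤ r
    · exact hp₀max (mem_closedBall_zero_iff.2 hpr)
    · push_neg at hpr
      have h1 : 1 - δ < ‖p‖ := lt_of_le_of_lt (le_max_left _ _) hpr
      have h2 := hδ p h1 hp
      have h3 := real_inner_le_norm p q
      have h4 : ‖p‖ * ‖q‖ ≤ ‖q‖ := mul_le_of_le_one_left (norm_nonneg q) hp.le
      linarith
  choose P hPlt hPeq using hex
  -- uniqueness of the maximizer
  have huniq : ∀ q p : EuclideanSpace ℝ (Fin N), ‖p‖ < 1 → ⟪p, q⟫ - H p = L q → p = P q := by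
    intro q p hp hpv
    by_contra hne
    have h₁ : ‖P q‖ < 1 := hPlt q
    have hm1 : ‖(2⁻¹ : ℝ) • (p + P q)‖ < 1 := by
      rw [norm_smul, Real.norm_eq_abs, abs_of_pos (by norm_num : (0:ℝ) < 2⁻¹)]
      have := norm_add_le p (P q)
      linarith
    have hmid := hHmid p (P q) hp h₁ hne
    have hub' := hub q ((2⁻¹ : ℝ) • (p + P q)) hm1
    have hinner : ⟪(2⁻¹ : ℝ) • (p + P q), q⟫ = (⟪p, q⟫ + ⟪P q, q⟫) / 2 := by
      rw [real_inner_smul_left, inner_add_left]; ring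
    have hPv := hPeq q
    rw [hinner] at hub'
    linarith
  -- uniform interiority of maximizers near a point
  have habs : ∀ q : EuclideanSpace ℝ (Fin N), ∃ δ : ℝ, 0 < δ ∧
      ∀ q' : EuclideanSpace ℝ (Fin N), ‖q' - q‖ ≤ 1 → ‖P q'‖ ≤ 1 - δ := by
    intro q
    obtain ⟨δ₀, hδ₀, hδ⟩ := hHblow (‖q‖ + 2)
    refine ⟨min δ₀ 2⁻¹, by positivity, fun q' hq' => ?_⟩
    by_contra hgt
    push_neg at hgt
    have h1 : 1 - δ₀ < ‖P q'‖ := by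
      have := min_le_left δ₀ 2⁻¹
      linarith
    have h2 := hδ _ h1 (hPlt q')
    have h3 := hPeq q'
    have h4 := real_inner_le_norm (P q') q'
    have h5 : ‖P q'‖ * ‖q'‖ ≤ ‖q'‖ := mul_le_of_le_one_left (norm_nonneg _) (hPlt q').le
    have h6 : ‖q'‖ ≤ ‖q‖ + 1 := by
      have := norm_sub_norm_le q' q
      linarith
    have h7 : 0 ≤ L q' := by
      have h := hub q' 0 (by simp)
      simpa [hH0] using h
    linarith
  -- nonnegativity of L
  have hL0 : ∀ q : EuclideanSpace ℝ (Fin N), 0 ≤ L q := by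
    intro q
    have h := hub q 0 (by simp)
    simpa [hH0] using h
  -- L q ≤ ‖q‖
  have hLle : ∀ q : EuclideanSpace ℝ (Fin N), L q ≤ ‖q‖ := by
    intro q
    refine hlub q _ fun p hp => ?_
    have h1 := real_inner_le_norm p q
    have h2 := hHnonneg p hp
    have h3 : ‖p‖ * ‖q‖ ≤ ‖q‖ := mul_le_of_le_one_left (norm_nonneg q) hp.le
    linarith
  -- continuity of the maximizer map
  have hPcont : ∀ q : EuclideanSpace ℝ (Fin N), ContinuousAt P q := by
    intro q
    rw [Metric.continuousAt_iff]
    intro ε hε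
    obtain ⟨δ, hδ0, hδ⟩ := habs q
    have hδ1 : 1 - δ < 1 := by linarith
    have hPqK : ‖P q‖ ≤ 1 - δ := hδ q (by simp)
    rcases (Metric.closedBall (0 : EuclideanSpace ℝ (Fin N)) (1 - δ) \ Metric.ball (P q) ε).eq_empty_or_nonempty with hSe | hSne
    · refine ⟨1, one_pos, fun q' hq' => ?_⟩
      have hK : P q' ∈ Metric.closedBall (0 : EuclideanSpace ℝ (Fin N)) (1 - δ) :=
        mem_closedBall_zero_iff.2 (hδ q' (by rw [← dist_eq_norm]; exact hq'.le))
      have := (diff_eq_empty.1 hSe) hK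
      simpa [Metric.mem_ball] using this
    · have hScomp : IsCompact (Metric.closedBall (0 : EuclideanSpace ℝ (Fin N)) (1 - δ) \ Metric.ball (P q) ε) := (isCompact_closedBall _ _).diff Metric.isOpen_ball
      have hSsub : (Metric.closedBall (0 : EuclideanSpace ℝ (Fin N)) (1 - δ) \ Metric.ball (P q) ε) ⊆ Metric.ball (0 : EuclideanSpace ℝ (Fin N)) 1 := fun x hx =>
        mem_ball_zero_iff.2 (lt_of_le_of_lt (mem_closedBall_zero_iff.1 hx.1) hδ1)
      obtain ⟨pm, hpmS, hpmmax⟩ := hScomp.exists_isMaxOn hSne ((hgc q).mono hSsub)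
      have hpm1 : ‖pm‖ < 1 := mem_ball_zero_iff.1 (hSsub hpmS)
      have hmlt : ⟪pm, q⟫ - H pm < L q := by
        refine lt_of_le_of_ne (hub q pm hpm1) fun h => ?_
        have heq := huniq q pm hpm1 h
        have : pm ∈ Metric.ball (P q) ε := by
          rw [heq]
          exact Metric.mem_ball_self hε
        exact hpmS.2 this
      refine ⟨min ((L q - (⟪pm, q⟫ - H pm)) / 3) 1,
        lt_min (by linarith) one_pos, fun q' hq' => ?_⟩
      have hq'1 : ‖q' - q‖ ≤ 1 := by
        rw [← dist_eq_norm]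
        exact le_of_lt (lt_of_lt_of_le hq' (min_le_right _ _))
      have hq'3 : ‖q' - q‖ < (L q - (⟪pm, q⟫ - H pm)) / 3 := by
        rw [← dist_eq_norm]
        exact lt_of_lt_of_le hq' (min_le_left _ _)
      have hPK : P q' ∈ Metric.closedBall (0 : EuclideanSpace ℝ (Fin N)) (1 - δ) :=
        mem_closedBall_zero_iff.2 (hδ q' hq'1)
      by_contra hcon
      have hPS : P q' ∈ (Metric.closedBall (0 : EuclideanSpace ℝ (Fin N)) (1 - δ) \ Metric.ball (P q) ε) := ⟨hPK, fun h => hcon (by simpa [Metric.mem_ball] using h)⟩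
      have e1 : ⟪P q', q⟫ - H (P q') ≤ ⟪pm, q⟫ - H pm := hpmmax hPS
      have e2 := hPeq q'
      have e3 : ⟪P q', q' - q⟫ = ⟪P q', q'⟫ - ⟪P q', q⟫ := inner_sub_right _ _ _
      have e4 : |⟪P q', q' - q⟫| ≤ ‖P q'‖ * ‖q' - q‖ := abs_real_inner_le_norm _ _
      have e4' : ‖P q'‖ * ‖q' - q‖ ≤ ‖q' - q‖ :=
        mul_le_of_le_one_left (norm_nonneg _) (hPlt q').le
      have e5 : ⟪P q', q' - q⟫ ≤ ‖q' - q‖ := le_trans (le_abs_self _) (le_trans e4 e4')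
      have e6 : ⟪P q, q'⟫ - H (P q) ≤ L q' := hub q' (P q) (hPlt q)
      have e7 : ⟪P q, q' - q⟫ = ⟪P q, q'⟫ - ⟪P q, q⟫ := inner_sub_right _ _ _
      have e8 : |⟪P q, q' - q⟫| ≤ ‖P q‖ * ‖q' - q‖ := abs_real_inner_le_norm _ _
      have e8' : ‖P q‖ * ‖q' - q‖ ≤ ‖q' - q‖ :=
        mul_le_of_le_one_left (norm_nonneg _) (hPlt q).le
      have e9 : -‖q' - q‖ ≤ ⟪P q, q' - q⟫ := by
        have := neg_abs_le ⟪P q, q' - q⟫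
        linarith
      have e10 := hPeq q
      linarith
  -- subgradient inequality
  have hlow : ∀ a b : EuclideanSpace ℝ (Fin N), L a + ⟪P a, b - a⟫ ≤ L b := by
    intro a b
    have h1 := hub b (P a) (hPlt a)
    have h2 := hPeq a
    have h3 : ⟪P a, b - a⟫ = ⟪P a, b⟫ - ⟪P a, a⟫ := inner_sub_right _ _ _
    linarith
  -- differentiability with gradient P q
  have hgrad : ∀ q : EuclideanSpace ℝ (Fin N), HasGradientAt L (P q) q := by
    intro q
    rw [hasGradientAt_iff_isLittleO, Asymptotics.isLittleO_iff]
    intro c hc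
    have hev : ∀ᶠ q' in nhds q, dist (P q') (P q) < c := Metric.tendsto_nhds.1 (hPcont q) c hc
    filter_upwards [hev] with q' hq'
    have l1 := hlow q q'
    have l2 := hlow q' q
    have i1 : ⟪P q' - P q, q' - q⟫ = ⟪P q', q' - q⟫ - ⟪P q, q' - q⟫ := inner_sub_left _ _ _
    have i2 : ⟪P q', q - q'⟫ = -⟪P q', q' - q⟫ := by
      rw [show q - q' = -(q' - q) by abel, inner_neg_right]
    have i3 : |⟪P q' - P q, q' - q⟫| ≤ ‖P q' - P q‖ * ‖q' - q‖ := abs_real_inner_le_norm _ _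
    have i4 : ‖P q' - P q‖ ≤ c := by
      rw [← dist_eq_norm]
      exact hq'.le
    have i5 : ‖P q' - P q‖ * ‖q' - q‖ ≤ c * ‖q' - q‖ :=
      mul_le_mul_of_nonneg_right i4 (norm_nonneg _)
    have i6 : ⟪P q' - P q, q' - q⟫ ≤ c * ‖q' - q‖ :=
      le_trans (le_abs_self _) (le_trans i3 i5)
    rw [Real.norm_eq_abs, abs_of_nonneg (by linarith)]
    linarith
  -- the limit of L q / ‖q‖
  have hlim : Tendsto (fun q => L q / ‖q‖)
      (Bornology.cobounded (EuclideanSpace ℝ (Fin N))) (nhds 1) := by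
    rw [Metric.tendsto_nhds]
    intro ε hε
    have he0 : 0 < min ε 1 := lt_min hε one_pos
    have he1 : min ε 1 ≤ 1 := min_le_right _ _
    have heε : min ε 1 ≤ ε := min_le_left _ _
    set e : ℝ := min ε 1 with he
    have hrK : (1 : ℝ) - e / 2 < 1 := by linarith
    have hKb : Metric.closedBall (0 : EuclideanSpace ℝ (Fin N)) (1 - e / 2) ⊆
        Metric.ball (0 : EuclideanSpace ℝ (Fin N)) 1 := Metric.closedBall_subset_ball hrK
    obtain ⟨pM, hpMK, hpMmax⟩ :=
      (isCompact_closedBall (0 : EuclideanSpace ℝ (Fin N)) (1 - e / 2)).exists_isMaxOn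
        ⟨0, Metric.mem_closedBall_self (by linarith)⟩ (hHcont.mono hKb)
    have hev := (tendsto_norm_cobounded_atTop (E := EuclideanSpace ℝ (Fin N))).eventually
      (eventually_ge_atTop (max 1 ((2 * |H pM| + 2) / e)))
    filter_upwards [hev] with q hq
    have hq1 : (1 : ℝ) ≤ ‖q‖ := le_trans (le_max_left _ _) hq
    have hq0 : (0 : ℝ) < ‖q‖ := by linarith
    have hqM : (2 * |H pM| + 2) / e ≤ ‖q‖ := le_trans (le_max_right _ _) hq
    set p : EuclideanSpace ℝ (Fin N) := ((1 - e / 2) * ‖q‖⁻¹) • q with hp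
    have hcoef : (0 : ℝ) ≤ (1 - e / 2) * ‖q‖⁻¹ :=
      mul_nonneg (by linarith) (inv_nonneg.2 hq0.le)
    have hpn : ‖p‖ = 1 - e / 2 := by
      rw [hp, norm_smul, Real.norm_eq_abs, abs_of_nonneg hcoef, mul_assoc,
        inv_mul_cancel₀ (ne_of_gt hq0), mul_one]
    have hpK : p ∈ Metric.closedBall (0 : EuclideanSpace ℝ (Fin N)) (1 - e / 2) :=
      mem_closedBall_zero_iff.2 (le_of_eq hpn)
    have hHp : H p ≤ H pM := hpMmax hpK
    have hip : ⟪p, q⟫ = (1 - e / 2) * ‖q‖ := by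
      rw [hp, real_inner_smul_left, real_inner_self_eq_norm_sq, pow_two]
      have hne : ‖q‖ ≠ 0 := ne_of_gt hq0
      field_simp
    have hp1 : ‖p‖ < 1 := by rw [hpn]; exact hrK
    have hlb : (1 - e / 2) * ‖q‖ - H pM ≤ L q := by
      have h := hub q p hp1
      rw [hip] at h
      linarith
    have hub' := hLle q
    have hM2 : H pM < e / 2 * ‖q‖ := by
      have h1 : 2 * |H pM| + 2 ≤ e * ‖q‖ := by
        rw [div_le_iff₀ he0] at hqM
        linarith [hqM]
      have h2 : H pM ≤ |H pM| := le_abs_self _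
      nlinarith
    rw [Real.dist_eq, abs_lt]
    constructor
    · have hlow1 : (1 - ε) * ‖q‖ < L q := by
        nlinarith [mul_le_mul_of_nonneg_right heε hq0.le]
      have h3 : 1 - ε < L q / ‖q‖ := (lt_div_iff₀ hq0).2 hlow1
      linarith
    · have h4 : L q / ‖q‖ ≤ 1 := (div_le_one hq0).2 hub'
      linarith
  exact ⟨hLle, fun q => (hgrad q).differentiableAt, fun q => by
    rw [(hgrad q).gradient]; exact hPlt q, hlim⟩
end
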